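/- arXiv:2007.00070 — 6 statements merged into one kernel-verified Lean document; each statement's English description precedes it below -/
import Mathlib

section
/- Fix an integer d ≥ 2. Suppose A ⊆ ℕ is d-automatic but not d-sparse, and A is not generic in ℕ. Fix a deterministic finite automaton M = (Q, q₀, F, δ) over Σ that recognizes {σ ∈ Σ* : [σ] ∈ A}. Then there is a non-dead state q ∈ Q such that L_q is regular but not sparse, L_q = L_q* (L_q equals its own Kleene star), and L_q satisfies condition (†). -/
set_option linter.unusedSectionVars false
set_option linter.unusedVariables false


/-- A language is regular if it is recognized by a DFA with finitely many states. -/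
def RegularLang {α : Type} (L : Set (List α)) : Prop :=
  ∃ (Q : Type) (_ : Fintype Q) (M : DFA α Q), M.accepts = L

/-- A language is sparse if it is regular and the number of its words of length at most `k`
is bounded by `C·(k^p + 1)`. -/
def SparseLang {α : Type} (L : Set (List α)) : Prop :=
  RegularLang L ∧ ∃ C p : ℕ, ∀ k : ℕ,
    {σ ∈ L | σ.length ≤ k}.Finite ∧ {σ ∈ L | σ.length ≤ k}.ncard ≤ C * (k ^ p + 1)

/-- Evaluation of a word over `Σ = {0,…,d−1}` base `d`, least significant digit first. -/
def evalNat {d : ℕ} : List (Fin d) → ℕ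
  | [] => 0
  | k :: σ => (k : ℕ) + d * evalNat σ

/-- `A ⊆ ℕ` is `d`-automatic: `{σ ∈ Σ* : [σ] ∈ A}` is regular. -/
def AutomaticN (d : ℕ) (A : Set ℕ) : Prop :=
  RegularLang {σ : List (Fin d) | evalNat σ ∈ A}

/-- The word `σ` has no trailing zeroes. -/
def NoTrailingZeros {d : ℕ} (σ : List (Fin d)) : Prop :=
  ∀ h : σ ≠ [], ((σ.getLast h : Fin d) : ℕ) ≠ 0

/-- `A ⊆ ℕ` is `d`-sparse: its language of representations with no trailing zeroes is sparse. -/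
def SparseN (d : ℕ) (A : Set ℕ) : Prop :=
  SparseLang {σ : List (Fin d) | evalNat σ ∈ A ∧ NoTrailingZeros σ}

/-- `A ⊆ ℕ` is generic in ℕ if finitely many (possibly negative) integer translates
of `A` cover ℕ. -/
def GenericN (A : Set ℕ) : Prop :=
  ∃ T : Finset ℤ, ∀ x : ℕ, ∃ t ∈ T, ∃ a ∈ A, (x : ℤ) = t + (a : ℤ)

/-- The Kleene star of a language: all finite concatenations of its words. -/
def KStarLang {α : Type} (L : Set (List α)) : Set (List α) :=
  {σ | ∃ ws : List (List α), (∀ w ∈ ws, w ∈ L) ∧ σ = ws.flatten}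

/-- Condition (†): there are `r` and `s ≥ 1` such that the set of words of `L` of length in
`r + sℕ` is infinite and has a forbidden suffix. -/
def CondDagger {d : ℕ} (L : Set (List (Fin d))) : Prop :=
  ∃ r s : ℕ, 1 ≤ s ∧
    {σ ∈ L | ∃ k : ℕ, σ.length = r + s * k}.Infinite ∧
    ∃ τ : List (Fin d), ∀ ρ ∈ L, (∃ k : ℕ, ρ.length = r + s * k) → ¬ τ <:+ ρ

/-- `L_q`: the words that take state `q` back to itself. -/
def Lq {α Q : Type} (M : DFA α Q) (q : Q) : Set (List α) :=
  {σ | M.evalFrom q σ = q}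


namespace S12

theorem dfa_evalFrom_append {α Q : Type} (M : DFA α Q) (s : Q) (x y : List α) :
    M.evalFrom s (x ++ y) = M.evalFrom (M.evalFrom s x) y :=
  List.foldl_append

/-- word power -/
def wpow {α : Type} (u : List α) (k : ℕ) : List α := (List.replicate k u).flatten

@[simp] theorem wpow_zero {α : Type} (u : List α) : wpow u 0 = [] := rfl

theorem wpow_succ {α : Type} (u : List α) (k : ℕ) : wpow u (k+1) = u ++ wpow u k := by
  unfold wpow
  rw [List.replicate_succ, List.flatten_cons]

theorem wpow_succ' {α : Type} (u : List α) (k : ℕ) : wpow u (k+1) = wpow u k ++ u := by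
  unfold wpow
  rw [List.replicate_succ', List.flatten_append]
  simp

theorem wpow_add {α : Type} (u : List α) (a b : ℕ) :
    wpow u (a + b) = wpow u a ++ wpow u b := by
  unfold wpow
  rw [List.replicate_add, List.flatten_append]

@[simp] theorem wpow_length {α : Type} (u : List α) (k : ℕ) :
    (wpow u k).length = k * u.length := by
  induction k with
  | zero => simp
  | succ n ih => rw [wpow_succ, List.length_append, ih]; ring

theorem evalFrom_wpow {α Q : Type} (M : DFA α Q) (q : Q) (u : List α)
    (h : M.evalFrom q u = q) (k : ℕ) : M.evalFrom q (wpow u k) = q := by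
  induction k with
  | zero => rfl
  | succ n ih => rw [wpow_succ, dfa_evalFrom_append, h, ih]

theorem evalNat_append {d : ℕ} (x y : List (Fin d)) :
    evalNat (x ++ y) = evalNat x + d ^ x.length * evalNat y := by
  induction x with
  | nil => simp [evalNat]
  | cons a t ih => simp [evalNat, ih]; ring

theorem evalNat_lt {d : ℕ} (x : List (Fin d)) : evalNat x < d ^ x.length := by
  induction x with
  | nil => simp [evalNat]
  | cons a t ih =>
    have ha : (a : ℕ) < d := a.isLt
    simp only [evalNat, List.length_cons, pow_succ]
    calc (a : ℕ) + d * evalNat t + 1 ≤ d + d * evalNat t := by omega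
    _ = d * (evalNat t + 1) := by ring
    _ ≤ d * d ^ t.length := by
        exact Nat.mul_le_mul_left d (by omega)
    _ = d ^ t.length * d := by ring

theorem evalNat_replicate {d : ℕ} (z : Fin d) (hz : (z : ℕ) = 0) (e : ℕ) :
    evalNat (List.replicate e z) = 0 := by
  induction e with
  | zero => rfl
  | succ n ih => simp [List.replicate_succ, evalNat, ih, hz]

theorem evalNat_pmap {d : ℕ} (L : List ℕ) (h : ∀ x ∈ L, x < d) :
    evalNat (L.pmap (fun x hx => (⟨x, hx⟩ : Fin d)) h) = Nat.ofDigits d L := by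
  induction L with
  | nil => simp [evalNat, Nat.ofDigits]
  | cons a t ih =>
    simp [List.pmap, evalNat, Nat.ofDigits_cons, ih]

/-- cycles concatenate -/
theorem flatten_mem_cyc {α Q : Type} (M : DFA α Q) (q : Q) (ws : List (List α))
    (h : ∀ w ∈ ws, M.evalFrom q w = q) : M.evalFrom q ws.flatten = q := by
  induction ws with
  | nil => rfl
  | cons w t ih =>
    rw [List.flatten_cons, dfa_evalFrom_append, h w (by simp)]
    exact ih (fun w hw => h w (by simp [hw]))

section Rset
variable {d : ℕ} {Q : Type} [Fintype Q]

noncomputable def Rset (M : DFA (Fin d) Q) : ℕ → Finset Q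
  | 0 => {M.start}
  | n+1 => letI := Classical.decEq Q
      (Rset M n).biUnion (fun p => Finset.image (M.step p) Finset.univ)

theorem eval_mem_Rset (M : DFA (Fin d) Q) (σ : List (Fin d)) :
    M.evalFrom M.start σ ∈ Rset M σ.length := by
  induction σ using List.reverseRecOn with
  | nil => simp [Rset, DFA.evalFrom]
  | append_singleton t a ih =>
    letI := Classical.decEq Q
    rw [dfa_evalFrom_append]
    simp only [List.length_append, List.length_singleton, Rset]
    refine Finset.mem_biUnion.mpr ⟨_, ih, ?_⟩
    simp [DFA.evalFrom]

theorem exists_of_mem_Rset (M : DFA (Fin d) Q) :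
    ∀ n (p : Q), p ∈ Rset M n → ∃ σ : List (Fin d), σ.length = n ∧ M.evalFrom M.start σ = p := by
  intro n
  induction n with
  | zero =>
    intro p hp
    simp only [Rset, Finset.mem_singleton] at hp
    exact ⟨[], rfl, hp.symm⟩
  | succ n ih =>
    intro p hp
    letI := Classical.decEq Q
    simp only [Rset, Finset.mem_biUnion, Finset.mem_image, Finset.mem_univ, true_and] at hp
    obtain ⟨q, hq, a, ha⟩ := hp
    obtain ⟨σ, hσl, hσe⟩ := ih q hq
    exact ⟨σ ++ [a], by simp [hσl], by rw [dfa_evalFrom_append, hσe]; simpa [DFA.evalFrom] using ha⟩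

theorem Rset_exists_period (M : DFA (Fin d) Q) :
    ∃ i T : ℕ, 1 ≤ T ∧ ∀ n, i ≤ n → Rset M (n + T) = Rset M n := by
  obtain ⟨x, y, hxy, hR⟩ := Fintype.exists_ne_map_eq_of_card_lt
    (fun i : Fin (Fintype.card (Finset Q) + 1) => Rset M i) (by simp)
  have shift : ∀ (a b : ℕ), Rset M a = Rset M b → ∀ e, Rset M (a + e) = Rset M (b + e) := by
    intro a b hab e
    induction e with
    | zero => simpa using hab
    | succ n ihe =>
      have : a + (n+1) = (a + n) + 1 := by omega
      rw [this, show b + (n+1) = (b + n) + 1 by omega]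
      simp only [Rset, ihe]
  rcases Nat.lt_or_ge (x : ℕ) (y : ℕ) with h | h
  · refine ⟨x, y - x, by omega, ?_⟩
    intro n hn
    have := shift x y hR (n - x)
    rw [show (x : ℕ) + (n - x) = n by omega, show (y : ℕ) + (n - x) = n + (y - x) by omega] at this
    exact this.symm
  · have h' : (y : ℕ) < x := by
      rcases Nat.lt_or_ge (y : ℕ) (x : ℕ) with h2 | h2
      · exact h2
      · exfalso; exact hxy (Fin.ext (by omega))
    refine ⟨y, x - y, by omega, ?_⟩
    intro n hn
    have := shift y x hR.symm (n - y)
    rw [show (y : ℕ) + (n - y) = n by omega, show (x : ℕ) + (n - y) = n + (x - y) by omega] at this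
    exact this.symm

theorem Rset_eq_of_modEq (M : DFA (Fin d) Q) (i T : ℕ) (hT : 1 ≤ T)
    (hper : ∀ n, i ≤ n → Rset M (n + T) = Rset M n) :
    ∀ a b, i ≤ a → i ≤ b → a ≡ b [MOD T] → Rset M a = Rset M b := by
  have step : ∀ a e, i ≤ a → Rset M (a + T * e) = Rset M a := by
    intro a e ha
    induction e with
    | zero => simp
    | succ n ihe =>
      have : a + T * (n+1) = (a + T * n) + T := by ring
      rw [this, hper _ (by omega), ihe]
  intro a b ha hb hab
  rcases le_or_gt a b with h | h
  · have hd : T ∣ (b - a) := (Nat.modEq_iff_dvd' h).mp hab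
    obtain ⟨e, he⟩ := hd
    have : b = a + T * e := by omega
    rw [this, step a e ha]
  · have hd : T ∣ (a - b) := (Nat.modEq_iff_dvd' (by omega)).mp hab.symm
    obtain ⟨e, he⟩ := hd
    have : a = b + T * e := by omega
    rw [this, step b e hb]

end Rset
end S12
namespace S12
section Counting
open scoped Classical

variable {d : ℕ} {S : Type} [Fintype S]

noncomputable def lastRet (D : DFA (Fin d) S) (p : S) (w : List (Fin d)) : ℕ :=
  Nat.findGreatest (fun i => D.evalFrom p (w.take i) = p) w.length

theorem lastRet_le (D : DFA (Fin d) S) (p : S) (w : List (Fin d)) :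
    lastRet D p w ≤ w.length := by
  unfold lastRet; exact Nat.findGreatest_le _

theorem lastRet_cycle (D : DFA (Fin d) S) (p : S) (w : List (Fin d)) :
    D.evalFrom p (w.take (lastRet D p w)) = p := by
  unfold lastRet
  exact Nat.findGreatest_spec (P := fun i => D.evalFrom p (w.take i) = p) (m := 0)
    (Nat.zero_le _) rfl

theorem lastRet_max (D : DFA (Fin d) S) (p : S) (w : List (Fin d)) {i : ℕ}
    (h1 : i ≤ w.length) (h2 : D.evalFrom p (w.take i) = p) : i ≤ lastRet D p w := by
  unfold lastRet
  exact Nat.le_findGreatest (P := fun i => D.evalFrom p (w.take i) = p) h1 h2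

theorem evalFrom_cons (D : DFA (Fin d) S) (p : S) (a : Fin d) (x : List (Fin d)) :
    D.evalFrom p (a :: x) = D.evalFrom (D.step p a) x := rfl

theorem evalFrom_singleton (D : DFA (Fin d) S) (p : S) (a : Fin d) :
    D.evalFrom p [a] = D.step p a := rfl

noncomputable def enc (D : DFA (Fin d) S) (p : S) (w : List (Fin d)) :
    List (ℕ × Fin d) × ℕ :=
  if h : w.length ≤ lastRet D p w then ([], lastRet D p w)
  else
    let i := lastRet D p w
    let r := enc D (D.step p (w.get ⟨i, by omega⟩)) (w.drop (i+1))
    ((i, w.get ⟨i, by omega⟩) :: r.1, r.2)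
termination_by w.length
decreasing_by
  simp only [List.length_drop]
  omega

theorem enc_of_le (D : DFA (Fin d) S) (p : S) (w : List (Fin d))
    (h : w.length ≤ lastRet D p w) : enc D p w = ([], lastRet D p w) := by
  rw [enc]; simp [h]

theorem enc_of_lt (D : DFA (Fin d) S) (p : S) (w : List (Fin d))
    (h : lastRet D p w < w.length) :
    enc D p w =
      ((lastRet D p w, w.get ⟨lastRet D p w, h⟩) ::
        (enc D (D.step p (w.get ⟨lastRet D p w, h⟩)) (w.drop (lastRet D p w + 1))).1,
       (enc D (D.step p (w.get ⟨lastRet D p w, h⟩)) (w.drop (lastRet D p w + 1))).2) := by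
  rw [enc]
  rw [dif_neg (by omega)]

theorem split_at_lastRet (D : DFA (Fin d) S) (p : S) (w : List (Fin d))
    (h : lastRet D p w < w.length) :
    w = w.take (lastRet D p w) ++ w.get ⟨lastRet D p w, h⟩ :: w.drop (lastRet D p w + 1) := by
  conv_lhs => rw [← List.take_append_drop (lastRet D p w) w]
  congr 1
  rw [List.get_eq_getElem]
  exact List.drop_eq_getElem_cons h

theorem enc_entry_bound (D : DFA (Fin d) S) :
    ∀ (n : ℕ) (w : List (Fin d)) (p : S), w.length ≤ n →
      (∀ x ∈ (enc D p w).1, x.1 ≤ w.length) ∧ (enc D p w).2 ≤ w.length := by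
  intro n
  induction n using Nat.strong_induction_on with
  | _ n IH =>
    intro w p hwn
    by_cases h : w.length ≤ lastRet D p w
    · rw [enc_of_le D p w h]
      exact ⟨by simp, lastRet_le D p w⟩
    · have hlt : lastRet D p w < w.length := by omega
      rw [enc_of_lt D p w hlt]
      have hdl : (w.drop (lastRet D p w + 1)).length < w.length := by
        simp only [List.length_drop]; omega
      have hIH := IH (w.drop (lastRet D p w + 1)).length (by omega)
        (w.drop (lastRet D p w + 1)) (D.step p (w.get ⟨lastRet D p w, hlt⟩)) le_rfl
      constructor
      · intro x hx
        rcases List.mem_cons.mp hx with rfl | hx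
        · exact le_of_lt hlt
        · exact le_trans (hIH.1 x hx) (le_of_lt hdl)
      · exact le_trans hIH.2 (le_of_lt hdl)

theorem enc_inj (D : DFA (Fin d) S)
    (hpoor : ∀ t : S,
      ((∃ x, D.evalFrom D.start x = t) ∧ ∃ y, D.evalFrom t y ∈ D.accept) →
      ∀ c c' : List (Fin d), D.evalFrom t c = t → D.evalFrom t c' = t →
        c.length = c'.length → c = c') :
    ∀ (n : ℕ) (w w' : List (Fin d)) (p : S), w.length ≤ n →
      (∃ x, D.evalFrom D.start x = p) →
      D.evalFrom p w ∈ D.accept → D.evalFrom p w' ∈ D.accept →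
      enc D p w = enc D p w' → w = w' := by
  intro n
  induction n using Nat.strong_induction_on with
  | _ n IH =>
    intro w w' p hwn hreach hw hw' hcode
    have huse : (∃ x, D.evalFrom D.start x = p) ∧ ∃ y, D.evalFrom p y ∈ D.accept :=
      ⟨hreach, ⟨w, hw⟩⟩
    by_cases h1 : w.length ≤ lastRet D p w
    · by_cases h2 : w'.length ≤ lastRet D p w'
      · rw [enc_of_le D p w h1, enc_of_le D p w' h2] at hcode
        have hi : lastRet D p w = lastRet D p w' := by
          simpa using congrArg Prod.snd hcode
        have hwc : D.evalFrom p w = p := by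
          have := lastRet_cycle D p w
          rwa [List.take_of_length_le h1] at this
        have hwc' : D.evalFrom p w' = p := by
          have := lastRet_cycle D p w'
          rwa [List.take_of_length_le h2] at this
        have hl : w.length = w'.length := by
          have l1 := lastRet_le D p w
          have l2 := lastRet_le D p w'
          omega
        exact hpoor p huse w w' hwc hwc' hl
      · exfalso
        have hlt' : lastRet D p w' < w'.length := by omega
        rw [enc_of_le D p w h1, enc_of_lt D p w' hlt'] at hcode
        simpa using congrArg Prod.fst hcode
    · have hlt : lastRet D p w < w.length := by omega
      by_cases h2 : w'.length ≤ lastRet D p w'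
      · exfalso
        rw [enc_of_lt D p w hlt, enc_of_le D p w' h2] at hcode
        simpa using congrArg Prod.fst hcode
      · have hlt' : lastRet D p w' < w'.length := by omega
        rw [enc_of_lt D p w hlt, enc_of_lt D p w' hlt'] at hcode
        simp only [Prod.mk.injEq, List.cons.injEq] at hcode
        obtain ⟨⟨⟨hi, ha⟩, htail1⟩, htail2⟩ := hcode
        have hC : D.evalFrom p (w.take (lastRet D p w)) = p := lastRet_cycle D p w
        have hC' : D.evalFrom p (w'.take (lastRet D p w')) = p := lastRet_cycle D p w'
        have hCl : (w.take (lastRet D p w)).length = (w'.take (lastRet D p w')).length := by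
          simp only [List.length_take]; omega
        have hCC : w.take (lastRet D p w) = w'.take (lastRet D p w') :=
          hpoor p huse _ _ hC hC' hCl
        have hsplit := split_at_lastRet D p w hlt
        have hsplit' := split_at_lastRet D p w' hlt'
        have hw2 : D.evalFrom (D.step p (w.get ⟨lastRet D p w, hlt⟩))
            (w.drop (lastRet D p w + 1)) ∈ D.accept := by
          have h0 : D.evalFrom p w ∈ D.accept := hw
          rw [hsplit] at h0
          rwa [dfa_evalFrom_append, hC, evalFrom_cons] at h0
        have hw2' : D.evalFrom (D.step p (w'.get ⟨lastRet D p w', hlt'⟩))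
            (w'.drop (lastRet D p w' + 1)) ∈ D.accept := by
          have h0 : D.evalFrom p w' ∈ D.accept := hw'
          rw [hsplit'] at h0
          rwa [dfa_evalFrom_append, hC', evalFrom_cons] at h0
        have hreach2 : ∃ x, D.evalFrom D.start x = D.step p (w.get ⟨lastRet D p w, hlt⟩) := by
          obtain ⟨x, hx⟩ := hreach
          refine ⟨x ++ w.take (lastRet D p w) ++ [w.get ⟨lastRet D p w, hlt⟩], ?_⟩
          rw [dfa_evalFrom_append, dfa_evalFrom_append, hx, hC, evalFrom_singleton]
        have htails : enc D (D.step p (w.get ⟨lastRet D p w, hlt⟩))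
              (w.drop (lastRet D p w + 1)) =
            enc D (D.step p (w'.get ⟨lastRet D p w', hlt'⟩))
              (w'.drop (lastRet D p w' + 1)) :=
          Prod.ext htail1 htail2
        rw [← ha] at htails hw2'
        have hdl : (w.drop (lastRet D p w + 1)).length < n := by
          have : (w.drop (lastRet D p w + 1)).length < w.length := by
            simp only [List.length_drop]; omega
          omega
        have hdrop := IH _ hdl _ _ _ le_rfl hreach2 hw2 hw2' htails
        rw [hsplit, hsplit', hCC, ← ha, ← hdrop]

theorem enc_code_len (D : DFA (Fin d) S) :
    ∀ (n : ℕ) (w : List (Fin d)) (p : S) (Av : Finset S), w.length ≤ n → p ∉ Av →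
      (∀ j, 1 ≤ j → j ≤ w.length → D.evalFrom p (w.take j) ∉ Av) →
      (enc D p w).1.length + Av.card ≤ Fintype.card S := by
  intro n
  induction n using Nat.strong_induction_on with
  | _ n IH =>
    intro w p Av hwn hp havoid
    by_cases h : w.length ≤ lastRet D p w
    · rw [enc_of_le D p w h]
      simpa using Finset.card_le_univ Av
    · have hlt : lastRet D p w < w.length := by omega
      rw [enc_of_lt D p w hlt]
      have htake : w.take (lastRet D p w + 1) =
          w.take (lastRet D p w) ++ [w.get ⟨lastRet D p w, hlt⟩] := by
        rw [List.take_succ]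
        congr 1
        rw [List.getElem?_eq_getElem hlt]
        simp [List.get_eq_getElem]
      have hevtake : D.evalFrom p (w.take (lastRet D p w + 1)) =
          D.step p (w.get ⟨lastRet D p w, hlt⟩) := by
        rw [htake, dfa_evalFrom_append, lastRet_cycle D p w, evalFrom_singleton]
      have hp2Av : D.step p (w.get ⟨lastRet D p w, hlt⟩) ∉ Av := by
        have := havoid (lastRet D p w + 1) (by omega) (by omega)
        rwa [hevtake] at this
      have hp2p : D.step p (w.get ⟨lastRet D p w, hlt⟩) ≠ p := by
        intro hcon
        have : lastRet D p w + 1 ≤ lastRet D p w :=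
          lastRet_max D p w (by omega) (by rw [hevtake, hcon])
        omega
      have htail : ∀ j, 1 ≤ j → j ≤ (w.drop (lastRet D p w + 1)).length →
          D.evalFrom (D.step p (w.get ⟨lastRet D p w, hlt⟩))
            ((w.drop (lastRet D p w + 1)).take j) ∉ insert p Av := by
        intro j hj1 hj2
        have heq : D.evalFrom (D.step p (w.get ⟨lastRet D p w, hlt⟩))
            ((w.drop (lastRet D p w + 1)).take j) =
            D.evalFrom p (w.take (lastRet D p w + 1 + j)) := by
          rw [List.take_add, dfa_evalFrom_append, hevtake]
        rw [heq]
        have hjb : lastRet D p w + 1 + j ≤ w.length := by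
          simp only [List.length_drop] at hj2; omega
        intro hmem
        rcases Finset.mem_insert.mp hmem with hx | hx
        · have : lastRet D p w + 1 + j ≤ lastRet D p w := lastRet_max D p w hjb hx
          omega
        · exact havoid (lastRet D p w + 1 + j) (by omega) hjb hx
      have hdl : (w.drop (lastRet D p w + 1)).length < n := by
        have : (w.drop (lastRet D p w + 1)).length < w.length := by
          simp only [List.length_drop]; omega
        omega
      have hIH := IH (w.drop (lastRet D p w + 1)).length hdl
        (w.drop (lastRet D p w + 1)) (D.step p (w.get ⟨lastRet D p w, hlt⟩))
        (insert p Av) le_rfl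
        (by rw [Finset.mem_insert]; push_neg; exact ⟨hp2p, hp2Av⟩) htail
      rw [Finset.card_insert_of_notMem hp] at hIH
      simp only [List.length_cons]
      omega

end Counting
end S12
namespace S12

theorem succ_pow_le (k j : ℕ) : (k+1)^j ≤ 2^j * (k^j + 1) := by
  rcases Nat.eq_zero_or_pos k with rfl | hk
  · have h1 : (0+1:ℕ)^j = 1 := one_pow j
    rw [h1]
    have h2 : 0 < 2^j * (0^j+1) := by positivity
    omega
  · calc (k+1)^j ≤ (2*k)^j := Nat.pow_le_pow_left (by omega) j
      _ = 2^j * k^j := mul_pow 2 k j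
      _ ≤ 2^j * (k^j + 1) := Nat.mul_le_mul_left _ (by omega)

theorem sq_lt_two_pow (j : ℕ) (hj : 5 ≤ j) : j * j < 2 ^ j := by
  induction j, hj using Nat.le_induction with
  | base => norm_num
  | succ n hn ih =>
    have h1 : 2*n + 1 ≤ n * n := by nlinarith
    have : (n+1) * (n+1) = n*n + (2*n+1) := by ring
    rw [this, pow_succ]
    omega

theorem lin_lt_two_pow (A p : ℕ) : ∃ j, 5 ≤ j ∧ p + 1 ≤ j ∧ A + j * p < 2 ^ j := by
  refine ⟨A + p + 6, by omega, by omega, ?_⟩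
  set j := A + p + 6 with hj
  calc A + j * p ≤ j + j * p := by omega
    _ = j * (p + 1) := by ring
    _ ≤ j * j := Nat.mul_le_mul_left _ (by omega)
    _ < 2 ^ j := sq_lt_two_pow j (by omega)

theorem exp_dom (C m p : ℕ) (hm : 1 ≤ m) : ∃ K, 1 ≤ K ∧ C * ((m*K)^p + 1) < 2^K := by
  obtain ⟨j, hj5, hjp, hlt⟩ := lin_lt_two_pow (C + m * p + 1) p
  refine ⟨2^j, Nat.one_le_two_pow, ?_⟩
  have hmp : m ^ p ≤ 2 ^ (m * p) := by
    calc m ^ p ≤ (2^m)^p := Nat.pow_le_pow_left (Nat.le_of_lt (Nat.lt_two_pow_self (n := m))) p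
      _ = 2 ^ (m*p) := by rw [← pow_mul]
  have hC : C ≤ 2 ^ C := Nat.le_of_lt (Nat.lt_two_pow_self (n := C))
  have h1 : (m * 2^j)^p = m^p * (2^j)^p := mul_pow m _ p
  have h2 : (2^j)^p = 2^(j*p) := by rw [← pow_mul]
  have h3 : (m * 2^j)^p ≤ 2^(m*p) * 2^(j*p) := by
    rw [h1, h2]
    exact Nat.mul_le_mul_right _ hmp
  have h4 : 2^(m*p) * 2^(j*p) = 2^(m*p + j*p) := by rw [← pow_add]
  have h5 : (m*2^j)^p + 1 ≤ 2^(m*p+j*p) + 2^(m*p+j*p) := by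
    have : (1:ℕ) ≤ 2^(m*p+j*p) := Nat.one_le_two_pow
    omega
  have h6 : (m*2^j)^p + 1 ≤ 2^(m*p+j*p+1) := by
    rw [pow_succ]; omega
  calc C * ((m*2^j)^p + 1) ≤ 2^C * 2^(m*p+j*p+1) := Nat.mul_le_mul hC h6
    _ = 2^(C + (m*p+j*p+1)) := by rw [← pow_add]
    _ < 2^(2^j) := by
        apply Nat.pow_lt_pow_right (by omega)
        omega

section Count2
open scoped Classical
variable {d : ℕ} {S : Type} [Fintype S]

theorem counting (D : DFA (Fin d) S)
    (hpoor : ∀ t : S,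
      ((∃ x, D.evalFrom D.start x = t) ∧ ∃ y, D.evalFrom t y ∈ D.accept) →
      ∀ c c' : List (Fin d), D.evalFrom t c = t → D.evalFrom t c' = t →
        c.length = c'.length → c = c') :
    ∃ C P : ℕ, ∀ k,
      {w : List (Fin d) | w ∈ D.accepts ∧ w.length ≤ k}.ncard ≤ C * (k ^ P + 1) := by
  refine ⟨(d+1)^(Fintype.card S) * 2^(Fintype.card S + 1), Fintype.card S + 1, fun k => ?_⟩
  set cS := Fintype.card S with hcS
  set Sk := {w : List (Fin d) | w ∈ D.accepts ∧ w.length ≤ k} with hSk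
  set F : List (Fin d) → (Fin cS → Option (Fin (k+1) × Fin d)) × Fin (k+1) :=
    fun w => (fun i => ((enc D D.start w).1[(i:ℕ)]?).map
                (fun x => (⟨min x.1 k, Nat.lt_succ_of_le (Nat.min_le_right _ _)⟩, x.2)),
              ⟨min (enc D D.start w).2 k, Nat.lt_succ_of_le (Nat.min_le_right _ _)⟩) with hF
  have hacc : ∀ w ∈ Sk, D.evalFrom D.start w ∈ D.accept := by
    intro w hw
    exact (DFA.mem_accepts D).mp hw.1
  have hinj : Sk.InjOn F := by
    intro w hw w' hw' hFeq
    have hb := (enc_entry_bound D w.length w D.start le_rfl)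
    have hb' := (enc_entry_bound D w'.length w' D.start le_rfl)
    have hlenc : (enc D D.start w).1.length ≤ cS := by
      have := enc_code_len D w.length w D.start ∅ le_rfl (Finset.notMem_empty _)
        (by intro j _ _; exact Finset.notMem_empty _)
      simpa using this
    have hlenc' : (enc D D.start w').1.length ≤ cS := by
      have := enc_code_len D w'.length w' D.start ∅ le_rfl (Finset.notMem_empty _)
        (by intro j _ _; exact Finset.notMem_empty _)
      simpa using this
    have h2 : (enc D D.start w).2 = (enc D D.start w').2 := by
      have := congrArg Prod.snd hFeq
      simp only [hF] at this
      have hmin : min (enc D D.start w).2 k = min (enc D D.start w').2 k := by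
        exact congrArg Fin.val this
      have b1 : (enc D D.start w).2 ≤ k := le_trans hb.2 hw.2
      have b2 : (enc D D.start w').2 ≤ k := le_trans hb'.2 hw'.2
      omega
    have h1 : (enc D D.start w).1 = (enc D D.start w').1 := by
      apply List.ext_getElem?
      intro n
      by_cases hn : n < cS
      · have := congrFun (congrArg Prod.fst hFeq) ⟨n, hn⟩
        simp only [hF] at this
        cases e : (enc D D.start w).1[n]? with
        | none =>
          cases e' : (enc D D.start w').1[n]? with
          | none => rfl
          | some y => rw [e, e'] at this; simp at this
        | some x =>
          cases e' : (enc D D.start w').1[n]? with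
          | none => rw [e, e'] at this; simp at this
          | some y =>
            rw [e, e'] at this
            simp only [Option.map_some, Option.some.injEq, Prod.mk.injEq,
              Fin.mk.injEq] at this
            obtain ⟨hvv, hsnd⟩ := this
            have hx1 : x.1 ≤ k := le_trans (hb.1 x (List.mem_of_getElem? e)) hw.2
            have hy1 : y.1 ≤ k := le_trans (hb'.1 y (List.mem_of_getElem? e')) hw'.2
            have : x.1 = y.1 := by omega
            exact congrArg some (Prod.ext this hsnd)
      · rw [List.getElem?_eq_none (by omega), List.getElem?_eq_none (by omega)]
    exact enc_inj D hpoor w.length w w' D.start le_rfl ⟨[], rfl⟩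
      (hacc w hw) (hacc w' hw') (Prod.ext h1 h2)
  have hcard : Sk.ncard ≤ ((k+1)*d+1)^cS * (k+1) := by
    calc Sk.ncard = (F '' Sk).ncard := (Set.ncard_image_of_injOn hinj).symm
      _ ≤ (Set.univ : Set ((Fin cS → Option (Fin (k+1) × Fin d)) × Fin (k+1))).ncard :=
          Set.ncard_le_ncard (Set.subset_univ _) Set.finite_univ
      _ = Fintype.card ((Fin cS → Option (Fin (k+1) × Fin d)) × Fin (k+1)) := by
          rw [Set.ncard_univ, Nat.card_eq_fintype_card]
      _ = ((k+1)*d+1)^cS * (k+1) := by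
          simp [Fintype.card_prod, Fintype.card_fun, Fintype.card_option]
  have harith : ((k+1)*d+1)^cS * (k+1) ≤ (d+1)^cS * 2^(cS+1) * (k^(cS+1) + 1) := by
    have s1 : (k+1)*d+1 ≤ (k+1)*(d+1) := by
      have : (k+1)*(d+1) = (k+1)*d + (k+1) := by ring
      omega
    calc ((k+1)*d+1)^cS * (k+1) ≤ ((k+1)*(d+1))^cS * (k+1) :=
          Nat.mul_le_mul_right _ (Nat.pow_le_pow_left s1 cS)
      _ = (d+1)^cS * ((k+1)^cS * (k+1)) := by rw [mul_pow]; ring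
      _ = (d+1)^cS * (k+1)^(cS+1) := by rw [← pow_succ]
      _ ≤ (d+1)^cS * (2^(cS+1) * (k^(cS+1)+1)) :=
          Nat.mul_le_mul_left _ (succ_pow_le k (cS+1))
      _ = (d+1)^cS * 2^(cS+1) * (k^(cS+1) + 1) := by ring
  exact le_trans hcard harith

end Count2

section Rich
variable {d : ℕ} {Q : Type}

theorem regular_Lq [Fintype Q] (M : DFA (Fin d) Q) (q : Q) :
    ∃ (Q' : Type) (_ : Fintype Q') (M' : DFA (Fin d) Q'), M'.accepts = Lq M q := by
  refine ⟨Q, inferInstance, ⟨M.step, q, {q}⟩, ?_⟩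
  ext σ
  simp only [DFA.mem_accepts]
  rfl

theorem kstar_Lq (M : DFA (Fin d) Q) (q : Q) : Lq M q = KStarLang (Lq M q) := by
  ext σ
  constructor
  · intro h
    refine ⟨[σ], ?_, by rw [List.flatten_cons, List.flatten_nil, List.append_nil]⟩
    intro w hw
    rw [List.mem_singleton.mp hw]
    exact h
  · rintro ⟨ws, hws, rfl⟩
    exact flatten_mem_cyc M q ws hws

/-- binary words to concatenations of u/v blocks -/
def bword {α : Type} (u v : List α) : List Bool → List α
  | [] => []
  | b :: t => (if b then u else v) ++ bword u v t

theorem bword_length {α : Type} (u v : List α) (h : u.length = v.length) (bs : List Bool) :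
    (bword u v bs).length = bs.length * u.length := by
  induction bs with
  | nil => simp [bword]
  | cons b t ih =>
    simp only [bword, List.length_append, List.length_cons, ih]
    rcases b with _ | _ <;> simp [h] <;> ring

theorem bword_mem_cyc (M : DFA (Fin d) Q) (q : Q) (u v : List (Fin d))
    (hu : M.evalFrom q u = q) (hv : M.evalFrom q v = q) (bs : List Bool) :
    M.evalFrom q (bword u v bs) = q := by
  induction bs with
  | nil => rfl
  | cons b t ih =>
    have hblock : M.evalFrom q (if b then u else v) = q := by
      cases b
      · simpa using hv
      · simpa using hu
    rw [bword, dfa_evalFrom_append, hblock]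
    exact ih

theorem bword_inj {α : Type} (u v : List α) (hlen : u.length = v.length) (hne : u ≠ v) :
    ∀ (bs bs' : List Bool), bs.length = bs'.length → bword u v bs = bword u v bs' → bs = bs' := by
  intro bs
  induction bs with
  | nil => intro bs' h _; exact (List.length_eq_zero_iff.mp h.symm).symm ▸ rfl
  | cons b t ih =>
    intro bs' h heq
    cases bs' with
    | nil => simp at h
    | cons b' t' =>
      simp only [bword] at heq
      have hblock : (if b then u else v) = (if b' then u else v) ∧ bword u v t = bword u v t' := by
        apply List.append_inj heq
        rcases b with _ | _ <;> rcases b' with _ | _ <;> simp [hlen]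
      have hbb : b = b' := by
        rcases b with _ | _ <;> rcases b' with _ | _ <;> simp_all
      have : t = t' := ih t' (by simpa using h) hblock.2
      rw [hbb, this]

theorem not_sparse_of_rich [Fintype Q] (M : DFA (Fin d) Q) (q : Q) (u v : List (Fin d))
    (hu : u ∈ Lq M q) (hv : v ∈ Lq M q) (hne : u ≠ v) (hlen : u.length = v.length) :
    ¬ SparseLang (Lq M q) := by
  rintro ⟨-, C, p, hb⟩
  have hm : 1 ≤ u.length := by
    rcases Nat.eq_zero_or_pos u.length with h0 | h
    · exfalso
      apply hne
      have h0' : v.length = 0 := by omega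
      rw [List.length_eq_zero_iff.mp h0, List.length_eq_zero_iff.mp h0']
    · exact h
  obtain ⟨K, hK1, hKlt⟩ := exp_dom C u.length p hm
  set k := u.length * K with hk
  obtain ⟨hfin, hcard⟩ := hb k
  -- the injection from length-K binary words
  classical
  set G : (Fin K → Bool) → List (Fin d) := fun f => bword u v (List.ofFn f) with hG
  have hGmem : ∀ f, G f ∈ {σ ∈ Lq M q | σ.length ≤ k} := by
    intro f
    constructor
    · exact bword_mem_cyc M q u v hu hv _
    · rw [bword_length u v hlen, List.length_ofFn, hk, Nat.mul_comm]
  have hGinj : Function.Injective G := by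
    intro f g hfg
    have : List.ofFn f = List.ofFn g :=
      bword_inj u v hlen hne _ _ (by simp) hfg
    funext i
    have := congrArg (fun l => l[(i : ℕ)]?) this
    simpa using this
  have h2K : 2^K ≤ {σ ∈ Lq M q | σ.length ≤ k}.ncard := by
    have himg : (Set.range G).ncard = 2^K := by
      have h1 : (Set.range G).ncard = (Set.univ : Set (Fin K → Bool)).ncard := by
        rw [← Set.image_univ]
        exact Set.ncard_image_of_injOn (Function.Injective.injOn hGinj)
      rw [h1, Set.ncard_univ, Nat.card_eq_fintype_card]
      simp
    calc (2:ℕ)^K = (Set.range G).ncard := himg.symm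
      _ ≤ {σ ∈ Lq M q | σ.length ≤ k}.ncard := by
          apply Set.ncard_le_ncard _ hfin
          rintro _ ⟨f, rfl⟩
          exact hGmem f
  omega

end Rich
end S12
namespace S12

section Track
variable {d : ℕ} {Q : Type} [Fintype Q]

def trackD (M : DFA (Fin d) Q) : DFA (Fin d) (Q × Bool) :=
  ⟨fun s a => (M.step s.1 a, decide ((a : ℕ) ≠ 0)), (M.start, true),
   {s | s.1 ∈ M.accept ∧ s.2 = true}⟩

theorem trackD_fst (M : DFA (Fin d) Q) (s : Q × Bool) (w : List (Fin d)) :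
    ((trackD M).evalFrom s w).1 = M.evalFrom s.1 w := by
  induction w generalizing s with
  | nil => rfl
  | cons a t ih =>
    rw [evalFrom_cons, evalFrom_cons, ih]
    rfl

theorem trackD_snd (M : DFA (Fin d) Q) (s : Q × Bool) (w : List (Fin d)) (h : w ≠ []) :
    ((trackD M).evalFrom s w).2 = decide ((w.getLast h : ℕ) ≠ 0) := by
  induction w using List.reverseRecOn with
  | nil => exact absurd rfl h
  | append_singleton t a ih =>
    rw [dfa_evalFrom_append]
    have h1 : (trackD M).evalFrom ((trackD M).evalFrom s t) [a] =
        (trackD M).step ((trackD M).evalFrom s t) a := rfl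
    rw [h1]
    have h2 : (t ++ [a]).getLast h = a := by
      simp [List.getLast_append]
    rw [h2]
    rfl

theorem trackD_accepts (M : DFA (Fin d) Q) (A : Set ℕ)
    (hM : M.accepts = {σ : List (Fin d) | evalNat σ ∈ A}) :
    (trackD M).accepts = {σ : List (Fin d) | evalNat σ ∈ A ∧ NoTrailingZeros σ} := by
  ext σ
  rw [DFA.mem_accepts]
  have hfst : ((trackD M).eval σ).1 = M.eval σ := trackD_fst M _ σ
  have hA : (M.eval σ ∈ M.accept) ↔ evalNat σ ∈ A := by
    rw [← DFA.mem_accepts, hM]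
    exact Iff.rfl
  have hsnd2 : ∀ (t : List (Fin d)) (a : Fin d),
      ((trackD M).eval (t ++ [a])).2 = decide ((a : ℕ) ≠ 0) := by
    intro t a
    show ((trackD M).evalFrom (trackD M).start (t ++ [a])).2 = _
    rw [dfa_evalFrom_append]
    rfl
  have hga : ∀ (t : List (Fin d)) (a : Fin d) (hne : t ++ [a] ≠ []),
      (t ++ [a]).getLast hne = a := by
    intro t a hne
    simp [List.getLast_append]
  constructor
  · rintro ⟨h1, h2⟩
    rw [hfst] at h1
    refine ⟨hA.mp h1, ?_⟩
    rcases List.eq_nil_or_concat σ with rfl | ⟨t, a, rfl⟩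
    · intro hne; exact absurd rfl hne
    · rw [List.concat_eq_append] at h2 ⊢
      intro hne
      rw [hga t a hne]
      rw [hsnd2 t a] at h2
      simpa using h2
  · rintro ⟨h1, h2⟩
    refine ⟨by rw [hfst]; exact hA.mpr h1, ?_⟩
    rcases List.eq_nil_or_concat σ with rfl | ⟨t, a, rfl⟩
    · rfl
    · rw [List.concat_eq_append] at h2 ⊢
      rw [hsnd2 t a]
      have := h2 (by simp)
      rw [hga t a (by simp)] at this
      simpa using this

end Track

section GapE
variable {d : ℕ} {Q : Type} [Fintype Q]

theorem gaps_of_not_generic {A : Set ℕ} (hd : 2 ≤ d) (hng : ¬ GenericN A) (n : ℕ) :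
    ∃ c : ℕ, ∀ y, c * d^n ≤ y → y < (c+1) * d^n → y ∉ A := by
  by_contra hcon
  push_neg at hcon
  apply hng
  refine ⟨Finset.Icc (-((d^n : ℕ) : ℤ)) ((d^n : ℕ) : ℤ), fun x => ?_⟩
  obtain ⟨y, hy1, hy2, hy3⟩ := hcon (x / d^n)
  have hdn : 0 < d^n := pow_pos (by omega) n
  have e2 : d ^ n * (x / d ^ n) + x % d ^ n = x := Nat.div_add_mod x (d^n)
  have e3 : x % d ^ n < d ^ n := Nat.mod_lt _ hdn
  have e4 : x / d ^ n * d ^ n = d ^ n * (x / d ^ n) := Nat.mul_comm _ _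
  have hstep : (x / d ^ n + 1) * d ^ n = x / d ^ n * d ^ n + d ^ n := by ring
  have hlb : x / d ^ n * d ^ n ≤ x := Nat.div_mul_le_self x _
  have hub : x < x / d ^ n * d ^ n + d ^ n := by omega
  rw [hstep] at hy2
  refine ⟨(x:ℤ) - y, ?_, y, hy3, by ring⟩
  rw [Finset.mem_Icc]
  constructor
  · omega
  · omega

theorem lemE (M : DFA (Fin d) Q) {A : Set ℕ} (hd : 2 ≤ d)
    (hM : M.accepts = {σ : List (Fin d) | evalNat σ ∈ A})
    (hng : ¬ GenericN A)
    (f : Q) (hfF : f ∈ M.accept) (κ : List (Fin d)) (hκ : M.evalFrom M.start κ = f)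
    (U V : List (Fin d)) (hU : M.evalFrom f U = f) (hV : M.evalFrom f V = f)
    (hUV : U ≠ V) (hlen : U.length = V.length) :
    CondDagger (Lq M f) := by
  classical
  have hm : 1 ≤ U.length := by
    rcases Nat.eq_zero_or_pos U.length with h0 | h
    · exfalso
      apply hUV
      have h0' : V.length = 0 := by omega
      rw [List.length_eq_zero_iff.mp h0, List.length_eq_zero_iff.mp h0']
    · exact h
  obtain ⟨i₀, T, hT, hper⟩ := Rset_exists_period M
  obtain ⟨c, hc⟩ := gaps_of_not_generic hd hng i₀
  set γ : List (Fin d) := (Nat.digits d c).pmap (fun x hx => (⟨x, hx⟩ : Fin d))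
    (fun x hx => Nat.digits_lt_base (by omega) hx) with hγdef
  have hγ : evalNat γ = c := by
    rw [hγdef, evalNat_pmap, Nat.ofDigits_digits]
  set z0 : Fin d := ⟨0, by omega⟩ with hz0
  set r := U.length * (i₀ + γ.length + T + κ.length + 1) with hr
  set s := T * U.length with hs
  set B := κ.length + r + T * (γ.length + i₀) with hB
  set e := (B - (γ.length + i₀)) % T with he
  set τ := γ ++ List.replicate e z0 with hτ
  have hτlen : τ.length = γ.length + e := by simp [hτ]
  have hτeval : evalNat τ = c := by
    rw [hτ, evalNat_append, evalNat_replicate z0 rfl, hγ]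
    ring
  have he_lt : e < T := Nat.mod_lt _ (by omega)
  have hr_ge : i₀ + γ.length + T + κ.length + 1 ≤ r := by
    rw [hr]
    exact Nat.le_mul_of_pos_left _ hm
  have hXB : γ.length + i₀ ≤ B := by
    have : γ.length + i₀ ≤ T * (γ.length + i₀) := Nat.le_mul_of_pos_left _ (by omega)
    rw [hB]; omega
  have hcong : (κ.length + r) % T = (e + (γ.length + i₀)) % T := by
    have h1 : B - (γ.length + i₀) + (γ.length + i₀) = B := by omega
    have h3 : (e + (γ.length + i₀)) % T = ((B - (γ.length + i₀)) + (γ.length + i₀)) % T :=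
      Nat.ModEq.add_right _ (Nat.mod_modEq _ T)
    rw [h1] at h3
    have h4 : B % T = (κ.length + r) % T := by rw [hB, Nat.add_mul_mod_self_left]
    rw [h3, h4]
  refine ⟨r, s, by rw [hs]; exact Nat.mul_pos (by omega) (by omega), ?_, τ, ?_⟩
  · -- infinitude
    set W : ℕ → List (Fin d) := fun j =>
      wpow U ((i₀ + γ.length + T + κ.length + 1) + T * j) with hW
    have hWmem : ∀ j, W j ∈ {σ ∈ Lq M f | ∃ k, σ.length = r + s * k} := by
      intro j
      refine ⟨evalFrom_wpow M f U hU _, j, ?_⟩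
      rw [hW]
      simp only [wpow_length]
      rw [hr, hs]
      ring
    have hWinj : Function.Injective W := by
      intro a b hab
      have hlab := congrArg List.length hab
      simp only [hW, wpow_length] at hlab
      have h1 := Nat.eq_of_mul_eq_mul_right hm hlab
      have h2 : T * a = T * b := by omega
      exact Nat.eq_of_mul_eq_mul_left (by omega) h2
    exact Set.Infinite.mono (by rintro _ ⟨j, rfl⟩; exact hWmem j)
      (Set.infinite_range_of_injective hWinj)
  · -- forbidden suffix
    rintro ρ hρ ⟨k, hk⟩ hsuf
    obtain ⟨π, hπ⟩ := hsuf
    have hρ' : M.evalFrom f ρ = f := hρ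
    have hlen2 : π.length + τ.length = r + s * k := by
      have := congrArg List.length hπ
      simp only [List.length_append] at this
      omega
    obtain ⟨sk, hsk⟩ : ∃ sk, s * k = sk := ⟨_, rfl⟩
    rw [hsk] at hlen2
    rw [hτlen] at hlen2
    have hi₀nk : i₀ ≤ κ.length + π.length := by omega
    have hmod : (κ.length + π.length) % T = i₀ % T := by
      have h5 : (κ.length + π.length) + (γ.length + e) = (κ.length + r) + sk := by omega
      have h6 : ((κ.length + r) + s * k) % T = (κ.length + r) % T := by
        rw [hs, show T * U.length * k = T * (U.length * k) by ring]
        exact Nat.add_mul_mod_self_left _ T (U.length * k)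
      rw [hsk] at h6
      have h7 : ((κ.length + π.length) + (γ.length + e)) % T = (e + (γ.length + i₀)) % T := by
        rw [h5, h6, hcong]
      have h8 : (e + (γ.length + i₀)) % T = (i₀ + (γ.length + e)) % T := by
        congr 1
        ring
      have h9 : ((κ.length + π.length) + (γ.length + e)) % T
          = (i₀ + (γ.length + e)) % T := by rw [h7, h8]
      have h10 : Nat.ModEq T ((κ.length + π.length) + (γ.length + e)) (i₀ + (γ.length + e)) := h9
      exact Nat.ModEq.add_right_cancel' _ h10
    have hpR : M.evalFrom M.start (κ ++ π) ∈ Rset M (κ.length + π.length) := by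
      have := eval_mem_Rset M (κ ++ π)
      rwa [List.length_append] at this
    have hReq : Rset M (κ.length + π.length) = Rset M i₀ :=
      Rset_eq_of_modEq M i₀ T hT hper _ i₀ hi₀nk le_rfl hmod
    rw [hReq] at hpR
    obtain ⟨σh, hσl, hσe⟩ := exists_of_mem_Rset M i₀ _ hpR
    have hval : evalNat (σh ++ τ) = evalNat σh + d ^ i₀ * c := by
      rw [evalNat_append, hσl, hτeval]
    have hσlt : evalNat σh < d ^ i₀ := by
      have := evalNat_lt σh
      rwa [hσl] at this
    have hnotA : evalNat (σh ++ τ) ∉ A := by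
      apply hc
      · rw [hval, Nat.mul_comm]
        exact Nat.le_add_left _ _
      · rw [hval]
        calc evalNat σh + d ^ i₀ * c < d ^ i₀ + d ^ i₀ * c := Nat.add_lt_add_right hσlt _
          _ = (c+1) * d ^ i₀ := by ring
    have hnacc : σh ++ τ ∉ M.accepts := by
      rw [hM]
      exact hnotA
    apply hnacc
    rw [DFA.mem_accepts]
    show M.evalFrom M.start (σh ++ τ) ∈ M.accept
    rw [dfa_evalFrom_append, hσe, ← dfa_evalFrom_append, List.append_assoc, hπ,
      dfa_evalFrom_append, hκ, hρ']
    exact hfF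

end GapE
end S12
theorem stmt12 (d : ℕ) (hd : 2 ≤ d) (A : Set ℕ)
    (hauto : AutomaticN d A) (hns : ¬ SparseN d A) (hng : ¬ GenericN A)
    (Q : Type) [Fintype Q] (M : DFA (Fin d) Q)
    (hM : M.accepts = {σ : List (Fin d) | evalNat σ ∈ A}) :
    ∃ q : Q, (∃ σ : List (Fin d), M.evalFrom q σ ∈ M.accept) ∧
      RegularLang (Lq M q) ∧ ¬ SparseLang (Lq M q) ∧
      Lq M q = KStarLang (Lq M q) ∧ CondDagger (Lq M q) := by
  classical
  set D := S12.trackD M with hD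
  have hDacc : D.accepts = {σ : List (Fin d) | evalNat σ ∈ A ∧ NoTrailingZeros σ} :=
    S12.trackD_accepts M A hM
  by_cases hpoor : ∀ t : Q × Bool,
      ((∃ x, D.evalFrom D.start x = t) ∧ ∃ y, D.evalFrom t y ∈ D.accept) →
      ∀ c c' : List (Fin d), D.evalFrom t c = t → D.evalFrom t c' = t →
        c.length = c'.length → c = c'
  · -- then the NTZ language would be sparse, contradiction
    exfalso
    apply hns
    obtain ⟨C, P, hCP⟩ := S12.counting D hpoor
    refine ⟨⟨Q × Bool, inferInstance, D, hDacc⟩, C, P, fun k => ?_⟩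
    have hseteq : {w : List (Fin d) | w ∈ D.accepts ∧ w.length ≤ k} =
        {σ ∈ {σ : List (Fin d) | evalNat σ ∈ A ∧ NoTrailingZeros σ} | σ.length ≤ k} := by
      rw [hDacc]; rfl
    have hfin : {σ ∈ {σ : List (Fin d) | evalNat σ ∈ A ∧ NoTrailingZeros σ} |
        σ.length ≤ k}.Finite := by
      apply Set.Finite.subset (List.finite_length_le (Fin d) k)
      intro σ hσ
      exact hσ.2
    refine ⟨hfin, ?_⟩
    have := hCP k
    rwa [hseteq] at this
  · push_neg at hpoor
    obtain ⟨t, huse, c1, c2, hc1, hc2, hcl, hcne⟩ := hpoor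
    obtain ⟨⟨x, hx⟩, ⟨y, hy⟩⟩ := huse
    have hreach : M.evalFrom M.start x = t.1 := by
      have h1 := S12.trackD_fst M D.start x
      rw [hx] at h1
      exact h1.symm
    have hexit : M.evalFrom t.1 y ∈ M.accept := by
      have h1 := S12.trackD_fst M t y
      have h2 : (D.evalFrom t y).1 ∈ M.accept := hy.1
      rwa [h1] at h2
    have hu : M.evalFrom t.1 c1 = t.1 := by
      have h1 := S12.trackD_fst M t c1
      rw [hc1] at h1
      exact h1.symm
    have hv : M.evalFrom t.1 c2 = t.1 := by
      have h1 := S12.trackD_fst M t c2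
      rw [hc2] at h1
      exact h1.symm
    have hm1 : 1 ≤ c1.length := by
      rcases Nat.eq_zero_or_pos c1.length with h0 | h
      · exfalso
        apply hcne
        have h0' : c2.length = 0 := by omega
        rw [List.length_eq_zero_iff.mp h0, List.length_eq_zero_iff.mp h0']
      · exact h
    by_cases hdag : CondDagger (Lq M t.1)
    · exact ⟨t.1, ⟨y, hexit⟩, S12.regular_Lq M t.1,
        S12.not_sparse_of_rich M t.1 c1 c2 hu hv hcne hcl, S12.kstar_Lq M t.1, hdag⟩
    · -- suffix-universality of the cycle language; climb to an accepting state
      have key : ∀ τ : List (Fin d), ∃ ρ, ρ ∈ Lq M t.1 ∧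
          (∃ k, ρ.length = 0 + c1.length * k) ∧ τ <:+ ρ := by
        intro τ
        by_contra hτ
        push_neg at hτ
        apply hdag
        refine ⟨0, c1.length, hm1, ?_, τ, ?_⟩
        · have hWmem : ∀ j, S12.wpow c1 j ∈
              {σ ∈ Lq M t.1 | ∃ k, σ.length = 0 + c1.length * k} := by
            intro j
            refine ⟨S12.evalFrom_wpow M t.1 c1 hu j, j, ?_⟩
            rw [S12.wpow_length]
            ring
          have hWinj : Function.Injective (fun j => S12.wpow c1 j) := by
            intro a b hab
            have hlab := congrArg List.length hab
            simp only [S12.wpow_length] at hlab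
            exact Nat.eq_of_mul_eq_mul_right hm1 hlab
          exact Set.Infinite.mono (by rintro _ ⟨j, rfl⟩; exact hWmem j)
            (Set.infinite_range_of_injective hWinj)
        · intro ρ hρ hex hsuf
          exact (hτ ρ hρ hex) hsuf
      obtain ⟨NN, hNN⟩ : ∃ NN, NN = Fintype.card Q + 1 := ⟨_, rfl⟩
      obtain ⟨ρ, hρ, -, hsuf⟩ := key (S12.wpow y NN)
      obtain ⟨π, hπ⟩ := hsuf
      have hρ' : M.evalFrom t.1 ρ = t.1 := hρ
      have horb : M.evalFrom (M.evalFrom t.1 π) (S12.wpow y NN) = t.1 := by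
        rw [← S12.dfa_evalFrom_append, hπ]
        exact hρ'
      obtain ⟨a, b, hab, heq⟩ := Fintype.exists_ne_map_eq_of_card_lt
        (fun j : Fin NN =>
          M.evalFrom (M.evalFrom t.1 π) (S12.wpow y (j : ℕ)))
        (by rw [Fintype.card_fin, hNN]; omega)
      -- wlog j₁ < j₂
      obtain ⟨j₁, j₂, hj12, hjle, hjeq⟩ :
          ∃ j₁ j₂ : ℕ, j₁ < j₂ ∧ j₂ < NN ∧
            M.evalFrom (M.evalFrom t.1 π) (S12.wpow y j₁) =
            M.evalFrom (M.evalFrom t.1 π) (S12.wpow y j₂) := by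
        have hal : (a : ℕ) < NN := a.isLt
        have hbl : (b : ℕ) < NN := b.isLt
        rcases Nat.lt_or_ge (a : ℕ) (b : ℕ) with h | h
        · exact ⟨a, b, h, hbl, heq⟩
        · have h' : (b : ℕ) < (a : ℕ) := by
            rcases Nat.lt_or_ge (b : ℕ) (a : ℕ) with h2 | h2
            · exact h2
            · exact absurd (Fin.ext (by omega)) hab
          exact ⟨b, a, h', hal, heq.symm⟩
      have hperiod : ∀ e, M.evalFrom (M.evalFrom t.1 π) (S12.wpow y (j₁ + e)) =
          M.evalFrom (M.evalFrom t.1 π) (S12.wpow y (j₂ + e)) := by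
        intro e
        rw [S12.wpow_add, S12.wpow_add, S12.dfa_evalFrom_append, S12.dfa_evalFrom_append, hjeq]
      have hcyc : M.evalFrom t.1 (S12.wpow y (j₂ - j₁)) = t.1 := by
        have h1 := hperiod (NN - j₁)
        rw [show j₁ + (NN - j₁) = NN by omega,
          show j₂ + (NN - j₁) = NN + (j₂ - j₁) by omega,
          S12.wpow_add, S12.dfa_evalFrom_append, horb] at h1
        exact h1.symm
      have hP0 : M.evalFrom (M.evalFrom t.1 y) (S12.wpow y (j₂ - j₁ - 1)) = t.1 := by
        have h1 : M.evalFrom t.1 (S12.wpow y ((j₂ - j₁ - 1) + 1)) = t.1 := by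
          rw [show (j₂ - j₁ - 1) + 1 = j₂ - j₁ by omega]
          exact hcyc
        rw [S12.wpow_succ, S12.dfa_evalFrom_append] at h1
        exact h1
      -- the accepting rich state
      set f := M.evalFrom t.1 y with hf
      have hfF : f ∈ M.accept := hexit
      have hfreach : M.evalFrom M.start (x ++ y) = f := by
        rw [S12.dfa_evalFrom_append, hreach]
      set P0 := S12.wpow y (j₂ - j₁ - 1) with hP0def
      have hZUc : M.evalFrom f (P0 ++ c1 ++ y) = f := by
        rw [S12.dfa_evalFrom_append, S12.dfa_evalFrom_append, hP0, hu]
      have hZVc : M.evalFrom f (P0 ++ c2 ++ y) = f := by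
        rw [S12.dfa_evalFrom_append, S12.dfa_evalFrom_append, hP0, hv]
      have hZne : P0 ++ c1 ++ y ≠ P0 ++ c2 ++ y := by
        intro h
        apply hcne
        rw [List.append_assoc, List.append_assoc] at h
        have h2 := List.append_cancel_left h
        exact List.append_cancel_right h2
      have hZlen : (P0 ++ c1 ++ y).length = (P0 ++ c2 ++ y).length := by
        simp [hcl]
      have hdagf : CondDagger (Lq M f) :=
        S12.lemE M hd hM hng f hfF (x ++ y) hfreach
          (P0 ++ c1 ++ y) (P0 ++ c2 ++ y) hZUc hZVc hZne hZlen
      exact ⟨f, ⟨[], hfF⟩, S12.regular_Lq M f,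
        S12.not_sparse_of_rich M f _ _ hZUc hZVc hZne hZlen, S12.kstar_Lq M f, hdagf⟩
end

section
/- Fix an integer d ≥ 2. Suppose A ⊆ ℕ is d-automatic and not generic in ℕ, and let M = (Q, q₀, F, δ) be a deterministic finite automaton over Σ recognizing L = {σ ∈ Σ* : [σ] ∈ A}. If q ∈ F is a finish state reachable from q₀ (i.e., δ(q₀, μ) = q for some word μ) and L_q is infinite, then L_q satisfies condition (†). -/
private def repw {α : Type} (ν : List α) : ℕ → List α
  | 0 => []
  | t+1 => ν ++ repw ν t

private lemma repw_length {α : Type} (ν : List α) (t : ℕ) :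
    (repw ν t).length = t * ν.length := by
  induction t with
  | zero => simp [repw]
  | succ t ih => simp [repw, ih]; ring

private lemma repw_evalFrom {α Q : Type} (M : DFA α Q) (q : Q) (ν : List α)
    (h : M.evalFrom q ν = q) (t : ℕ) : M.evalFrom q (repw ν t) = q := by
  induction t with
  | zero => rfl
  | succ t ih => rw [repw, M.evalFrom_of_append, h, ih]

private lemma evalNat_append' {d : ℕ} (σ τ : List (Fin d)) :
    evalNat (σ ++ τ) = evalNat σ + d ^ σ.length * evalNat τ := by
  induction σ with
  | nil => simp [evalNat]
  | cons a σ ih => simp [evalNat, ih, pow_succ]; ring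

private lemma evalNat_lt' {d : ℕ} (hd : 1 ≤ d) (σ : List (Fin d)) :
    evalNat σ < d ^ σ.length := by
  induction σ with
  | nil => simpa [evalNat]
  | cons a σ ih =>
    have ha : (a : ℕ) + 1 ≤ d := a.isLt
    have : (a : ℕ) + d * evalNat σ + 1 ≤ d * d ^ σ.length := by
      calc (a : ℕ) + d * evalNat σ + 1 ≤ d + d * evalNat σ := by omega
        _ = d * (evalNat σ + 1) := by ring
        _ ≤ d * d ^ σ.length := Nat.mul_le_mul_left d ih
    simpa [evalNat, pow_succ, mul_comm] using this

private lemma exists_word' (d : ℕ) (hd : 2 ≤ d) (x : ℕ) :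
    ∃ σ : List (Fin d), evalNat σ = x := by
  induction x using Nat.strong_induction_on with
  | _ x ih =>
    rcases Nat.eq_zero_or_pos x with rfl | hx
    · exact ⟨[], rfl⟩
    · obtain ⟨σ, hσ⟩ := ih (x / d) (Nat.div_lt_self hx (by omega))
      exact ⟨⟨x % d, Nat.mod_lt x (by omega)⟩ :: σ, by
        simp [evalNat, hσ, Nat.mod_add_div]⟩

private lemma evalNat_replicate_zero {d : ℕ} (hd : 2 ≤ d) (p : ℕ) :
    evalNat (List.replicate p (⟨0, by omega⟩ : Fin d)) = 0 := by
  induction p with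
  | zero => rfl
  | succ p ih => simp [List.replicate_succ, evalNat, ih]

theorem stmt13 (d : ℕ) (hd : 2 ≤ d) (A : Set ℕ)
    (hauto : AutomaticN d A) (hng : ¬ GenericN A)
    (Q : Type) [Fintype Q] (M : DFA (Fin d) Q)
    (hM : M.accepts = {σ : List (Fin d) | evalNat σ ∈ A})
    (q : Q) (hqF : q ∈ M.accept) (hreach : ∃ μ : List (Fin d), M.evalFrom M.start μ = q)
    (hinf : (Lq M q).Infinite) :
    CondDagger (Lq M q) := by
  classical
  obtain ⟨μ, hμ⟩ := hreach
  set m := μ.length with hm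
  -- the set of states reachable from the start by words of length e
  set S : ℕ → Set Q :=
    fun e => {p | ∃ π : List (Fin d), π.length = e ∧ M.evalFrom M.start π = p} with hSdef
  have hstep : ∀ e, S (e + 1) = {p | ∃ p' ∈ S e, ∃ a : Fin d, M.step p' a = p} := by
    intro e; ext p; constructor
    · rintro ⟨π, hlen, hev⟩
      have hne : π ≠ [] := by intro h; simp [h] at hlen
      obtain ⟨π', a, rfl⟩ : ∃ π' a, π = π' ++ [a] :=
        ⟨π.dropLast, π.getLast hne, (π.dropLast_append_getLast hne).symm⟩
      refine ⟨M.evalFrom M.start π', ⟨π', ?_, rfl⟩, a, ?_⟩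
      · have := hlen; simpa using this
      · simpa [DFA.evalFrom_append_singleton] using hev
    · rintro ⟨p', ⟨π, hlen, rfl⟩, a, rfl⟩
      exact ⟨π ++ [a], by simp [hlen], by simp [DFA.evalFrom_append_singleton]⟩
  -- pigeonhole: S is eventually periodic
  obtain ⟨i, j, hij, hSij⟩ := Finite.exists_ne_map_eq_of_infinite S
  -- wlog i < j
  obtain ⟨r₀, s₁, hs₁, hper1⟩ : ∃ r₀ s₁ : ℕ, 1 ≤ s₁ ∧ S r₀ = S (r₀ + s₁) := by
    rcases Nat.lt_or_ge i j with h | h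
    · exact ⟨i, j - i, by omega, by rw [show i + (j - i) = j by omega]; exact hSij⟩
    · have : j < i := by omega
      exact ⟨j, i - j, by omega, by rw [show j + (i - j) = i by omega]; exact hSij.symm⟩
  have hshift : ∀ t, S (r₀ + t) = S (r₀ + s₁ + t) := by
    intro t
    induction t with
    | zero => simpa using hper1
    | succ t ih =>
      rw [show r₀ + (t + 1) = (r₀ + t) + 1 by ring, show r₀ + s₁ + (t + 1) = (r₀ + s₁ + t) + 1 by ring,
        hstep, hstep, ih]
  have hper : ∀ e, r₀ ≤ e → ∀ k, S (e + s₁ * k) = S e := by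
    intro e he k
    induction k with
    | zero => simp
    | succ k ih =>
      have h1 : S (e + s₁ * k) = S (e + s₁ * k + s₁) := by
        have := hshift (e - r₀ + s₁ * k)
        rw [show r₀ + (e - r₀ + s₁ * k) = e + s₁ * k by omega,
          show r₀ + s₁ + (e - r₀ + s₁ * k) = e + s₁ * k + s₁ by omega] at this
        exact this
      rw [show e + s₁ * (k + 1) = e + s₁ * k + s₁ by ring, ← h1, ih]
  have hSeq : ∀ e₁ e₂, r₀ ≤ e₁ → r₀ ≤ e₂ → e₁ % s₁ = e₂ % s₁ → S e₁ = S e₂ := by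
    have key : ∀ e₁ e₂, r₀ ≤ e₁ → e₁ ≤ e₂ → e₁ % s₁ = e₂ % s₁ → S e₁ = S e₂ := by
      intro e₁ e₂ h1 hle hmod
      obtain ⟨k, hk⟩ := (Nat.modEq_iff_dvd' hle).mp hmod
      have : e₂ = e₁ + s₁ * k := by omega
      rw [this, hper e₁ h1 k]
    intro e₁ e₂ h1 h2 hmod
    rcases Nat.le_total e₁ e₂ with h | h
    · exact key e₁ e₂ h1 h hmod
    · exact (key e₂ e₁ h2 h hmod.symm).symm
  by_cases hcase : ∃ e, r₀ ≤ e ∧ ∃ τ : List (Fin d),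
      (∃ ρ₀ ∈ Lq M q, (ρ₀.length + m) % s₁ = (e + τ.length) % s₁) ∧
      ∀ p ∈ S e, M.evalFrom p τ ∉ M.accept
  · -- Case A: build the dagger witness
    obtain ⟨e, he, τ, ⟨ρ₀, hρ₀, hcong⟩, hforb⟩ := hcase
    -- a nonempty loop word
    obtain ⟨ν, hν, hνne⟩ : ∃ ν ∈ Lq M q, ν ≠ [] := by
      obtain ⟨ν, hν1, hν2⟩ := (hinf.diff (Set.finite_singleton [])).nonempty
      exact ⟨ν, hν1, by simpa using hν2⟩
    have hℓ₀ : 1 ≤ ν.length := by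
      cases ν with
      | nil => exact absurd rfl hνne
      | cons a l => simp
    set ℓ₀ := ν.length
    set s : ℕ := s₁ * ℓ₀ with hsdef
    have hs : 1 ≤ s := Nat.one_le_iff_ne_zero.mpr (by positivity)
    set jj : ℕ := r₀ + τ.length + m + 1 with hjdef
    set r : ℕ := ρ₀.length + s * jj with hrdef
    have hjr : jj ≤ s * jj := Nat.le_mul_of_pos_left jj hs
    refine ⟨r, s, hs, ?_, τ, ?_⟩
    · -- infinitude
      have : ∀ k : ℕ, (ρ₀ ++ repw ν (s₁ * (jj + k))) ∈
          {σ ∈ Lq M q | ∃ k : ℕ, σ.length = r + s * k} := by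
        intro k
        constructor
        · show M.evalFrom q _ = q
          rw [M.evalFrom_of_append, hρ₀, repw_evalFrom M q ν hν]
        · refine ⟨k, ?_⟩
          simp only [List.length_append, repw_length]
          rw [hrdef, hsdef]; ring
      refine Set.infinite_of_injective_forall_mem (f := fun k => ρ₀ ++ repw ν (s₁ * (jj + k)))
        ?_ this
      intro k₁ k₂ hkk
      have := congrArg List.length hkk
      simp only [List.length_append, repw_length] at this
      have hs₁ℓ : 1 ≤ s₁ * ℓ₀ := hs
      nlinarith [this]
    · -- forbidden suffix
      rintro ρ hρ ⟨k, hlen⟩ hsuf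
      obtain ⟨π, rfl⟩ := hsuf
      have hπτ : π.length + τ.length = r + s * k := by simpa using hlen
      have hτr : τ.length ≤ r := by omega
      -- the state after reading μ ++ π
      have hmem : M.evalFrom M.start (μ ++ π) ∈ S (m + π.length) :=
        ⟨μ ++ π, by simp [hm], rfl⟩
      have hcong2 : (m + π.length) % s₁ = e % s₁ := by
        have hss : s * jj = s₁ * (ℓ₀ * jj) := by rw [hsdef]; ring
        have hsk : s * k = s₁ * (ℓ₀ * k) := by rw [hsdef]; ring
        have h2 : s₁ * (ℓ₀ * (jj + k)) = s₁ * (ℓ₀ * jj) + s₁ * (ℓ₀ * k) := by ring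
        have heq : m + π.length + τ.length = (ρ₀.length + m) + s₁ * (ℓ₀ * (jj + k)) := by
          omega
        have h1 : (m + π.length + τ.length) % s₁ = (ρ₀.length + m) % s₁ := by
          rw [heq, Nat.add_mul_mod_self_left]
        have h2 : (m + π.length + τ.length) % s₁ = (e + τ.length) % s₁ := by
          rw [h1, hcong]
        exact Nat.ModEq.add_right_cancel' τ.length h2
      have hge : r₀ ≤ m + π.length := by omega
      have hSE : S (m + π.length) = S e := hSeq _ _ hge he hcong2
      rw [hSE] at hmem
      have hnot := hforb _ hmem
      apply hnot
      have hfin : M.evalFrom (M.evalFrom M.start (μ ++ π)) τ = q := by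
        rw [← M.evalFrom_of_append, List.append_assoc, M.evalFrom_of_append, hμ]
        exact hρ
      rw [hfin]
      exact hqF
  · -- Case B: A would be generic, contradiction
    exfalso
    apply hng
    push_neg at hcase
    refine ⟨Finset.Icc (-(d ^ r₀ : ℤ)) (d ^ r₀), ?_⟩
    intro y
    obtain ⟨x, rem, hrem, hxy⟩ : ∃ x rem, rem < d ^ r₀ ∧ y = d ^ r₀ * x + rem :=
      ⟨y / d ^ r₀, y % d ^ r₀, Nat.mod_lt y (by positivity),
        (Nat.div_add_mod y (d ^ r₀)).symm⟩
    obtain ⟨σ₀, hσ₀⟩ := exists_word' d hd x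
    set X := r₀ + σ₀.length with hX
    set pad : ℕ := m + s₁ * X - X with hpad
    have hXle : X ≤ s₁ * X := Nat.le_mul_of_pos_left X hs₁
    set τx : List (Fin d) := σ₀ ++ List.replicate pad (⟨0, by omega⟩ : Fin d) with hτx
    have hτxval : evalNat τx = x := by
      rw [hτx, evalNat_append', evalNat_replicate_zero hd, hσ₀]; ring
    have hτxlen : r₀ + τx.length = m + s₁ * X := by
      simp only [hτx, List.length_append, List.length_replicate]
      omega
    have hcong3 : (([] : List (Fin d)).length + m) % s₁ = (r₀ + τx.length) % s₁ := by
      rw [hτxlen]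
      simp [Nat.add_mul_mod_self_left]
    obtain ⟨p, hpS, hpacc⟩ := hcase r₀ le_rfl τx ⟨[], rfl, hcong3⟩
    obtain ⟨π, hπlen, hπev⟩ := hpS
    -- the word π ++ τx is accepted
    have hacc : (π ++ τx) ∈ M.accepts := by
      rw [DFA.mem_accepts]
      show M.evalFrom M.start (π ++ τx) ∈ M.accept
      rw [M.evalFrom_of_append, hπev]
      exact hpacc
    rw [hM] at hacc
    have haval : evalNat (π ++ τx) = evalNat π + d ^ r₀ * x := by
      rw [evalNat_append', hπlen, hτxval]
    have hπlt : evalNat π < d ^ r₀ := by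
      have := evalNat_lt' (by omega) π
      rwa [hπlen] at this
    have hlo : d ^ r₀ * x ≤ evalNat (π ++ τx) := by rw [haval]; omega
    have hhi : evalNat (π ++ τx) < d ^ r₀ * x + d ^ r₀ := by rw [haval]; omega
    have hcast : ((d : ℤ)) ^ r₀ = ((d ^ r₀ : ℕ) : ℤ) := by push_cast; ring
    refine ⟨(y : ℤ) - (evalNat (π ++ τx) : ℤ), ?_, evalNat (π ++ τx), hacc, by ring⟩
    simp only [Finset.mem_Icc]
    rw [hcast]
    omega
end

section
/- Let M = (Q, q₀, F, δ) be a deterministic finite automaton over a finite alphabet, and let q, q′ ∈ Q be states such that q′ is reachable from q but q is not reachable from q′. Then there exists a word τ such that for every state r ∈ Q, q is not reachable from δ(r, τ). In particular, τ is a forbidden infix for L_q: no word of L_q contains τ as a contiguous substring. -/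
/-- State `r` is reachable from state `p` in the DFA `M`. -/
def Reachable {α Q : Type} (M : DFA α Q) (p r : Q) : Prop :=
  ∃ σ : List α, M.evalFrom p σ = r

private lemma kill_list {Λ Q : Type} (M : DFA Λ Q) (q q' : Q)
    (h1 : Reachable M q q') (h2 : ¬ Reachable M q' q) (L : List Q) :
    ∃ τ : List Λ, ∀ r ∈ L, ¬ Reachable M (M.evalFrom r τ) q := by
  induction L with
  | nil => exact ⟨[], by simp⟩
  | cons r L ih =>
    obtain ⟨τ, hτ⟩ := ih
    by_cases h : Reachable M (M.evalFrom r τ) q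
    · obtain ⟨π, hπ⟩ := h
      obtain ⟨σ, hσ⟩ := h1
      refine ⟨τ ++ (π ++ σ), ?_⟩
      intro s hs
      rcases List.mem_cons.1 hs with rfl | hs
      · rw [DFA.evalFrom_of_append, DFA.evalFrom_of_append, hπ, hσ]
        exact h2
      · intro ⟨μ, hμ⟩
        exact hτ s hs ⟨π ++ σ ++ μ, by
          simpa [DFA.evalFrom_of_append] using hμ⟩
    · refine ⟨τ, ?_⟩
      intro s hs
      rcases List.mem_cons.1 hs with rfl | hs
      · exact h
      · exact hτ s hs

theorem stmt14 {Λ Q : Type} [Fintype Q] (M : DFA Λ Q) (q q' : Q)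
    (h1 : Reachable M q q') (h2 : ¬ Reachable M q' q) :
    ∃ τ : List Λ,
      (∀ r : Q, ¬ Reachable M (M.evalFrom r τ) q) ∧
      (∀ ρ ∈ Lq M q, ¬ τ <:+: ρ) := by
  obtain ⟨τ, hτ⟩ := kill_list M q q' h1 h2 (Finset.univ.toList)
  refine ⟨τ, fun r => hτ r (Finset.mem_toList.2 (Finset.mem_univ r)), ?_⟩
  intro ρ hρ ⟨a, b, hab⟩
  refine hτ (M.evalFrom q a) (Finset.mem_toList.2 (Finset.mem_univ _)) ⟨b, ?_⟩
  rw [← DFA.evalFrom_of_append, ← DFA.evalFrom_of_append, ← List.append_assoc, hab]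
  exact hρ
end

section
/- Fix integers d ≥ 2 and m ≥ 1. Suppose X ⊆ ℤ^m is d-automatic, and for each 1 ≤ i ≤ m fix a tuple (ℓ_{i1}, …, ℓ_{i n_i}) of letters from Σ±. Then the set of tuples (k_{ij})_{1≤i≤m, 1≤j≤n_i} of natural numbers such that the vector whose i-th coordinate is [ℓ_{i1}^{k_{i1}} ℓ_{i2}^{k_{i2}} ⋯ ℓ_{i n_i}^{k_{i n_i}}] belongs to X, is definable in (ℕ,+). -/
open FirstOrder

/-- The first-order language with a single binary function symbol. -/
def plusLang : FirstOrder.Language where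
  Functions := fun n => match n with | 2 => Unit | _ => Empty
  Relations := fun _ => Empty

instance : plusLang.Structure ℕ where
  funMap {n} f x :=
    match n, f with
    | 2, _ => x 0 + x 1
  RelMap {n} r _ := nomatch r

/-- A set `S ⊆ ℕ^α` is definable in `(ℕ,+)` (parameters allowed). -/
def DefinableNatAdd {α : Type} (S : Set (α → ℕ)) : Prop :=
  Set.Definable (Set.univ : Set ℕ) plusLang S

/-- Evaluation of a word over ℤ base `d`, least significant digit first. -/
def evalZ (d : ℤ) : List ℤ → ℤ
  | [] => 0
  | k :: σ => k + d * evalZ d σ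

/-- Coordinatewise evaluation of a word over `ℤ^m` base `d`. -/
def evalVec (d : ℤ) {m : ℕ} (σ : List (Fin m → ℤ)) : Fin m → ℤ :=
  fun i => evalZ d (σ.map fun v => v i)

/-- `X ⊆ ℤ^m` is `d`-automatic: the language of all base-`d` representations of elements of `X`
over the alphabet `Σ±^m` is regular. -/
def AutomaticVec (d : ℕ) {m : ℕ} (X : Set (Fin m → ℤ)) : Prop :=
  RegularLang {σ : List (Fin m → ℤ) | (∀ v ∈ σ, ∀ i, (v i).natAbs ≤ d - 1) ∧ evalVec d σ ∈ X}

abbrev PVar (α : Type) : Type := ↥(Set.univ : Set ℕ) ⊕ α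

def tadd {γ : Type} (t₁ t₂ : plusLang.Term γ) : plusLang.Term γ :=
  FirstOrder.Language.Term.func (l := 2) () ![t₁, t₂]

@[simp] lemma realize_tadd {γ : Type} (t₁ t₂ : plusLang.Term γ) (v : γ → ℕ) :
    (tadd t₁ t₂).realize v = t₁.realize v + t₂.realize v := rfl

def lsum {α : Type} (c : ℕ) (l : List α) : plusLang.Term (PVar α) :=
  l.foldr (fun i t => tadd (FirstOrder.Language.Term.var (Sum.inr i)) t)
    (FirstOrder.Language.Term.var (Sum.inl ⟨c, Set.mem_univ c⟩))

lemma realize_lsum {α : Type} (c : ℕ) (l : List α) (x : α → ℕ) :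
    (lsum c l).realize (Sum.elim Subtype.val x) = c + (l.map x).sum := by
  induction l with
  | nil => simp [lsum, FirstOrder.Language.Term.realize]
  | cons a l ih =>
      simp only [lsum, List.foldr_cons] at ih ⊢
      simp only [realize_tadd, ih, List.map_cons, List.sum_cons]
      simp [FirstOrder.Language.Term.realize]
      ring

lemma defin_atom {α : Type} (a b : ℕ) (u w : List α) :
    DefinableNatAdd {x : α → ℕ | a + (u.map x).sum = b + (w.map x).sum} := by
  rw [DefinableNatAdd, Set.definable_iff_exists_formula_sum]
  refine ⟨FirstOrder.Language.Term.equal (lsum a u) (lsum b w), ?_⟩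
  ext x
  simp [FirstOrder.Language.Formula.Realize, FirstOrder.Language.Term.equal, realize_lsum,
    FirstOrder.Language.BoundedFormula.Realize]

lemma DefinableNatAdd.congr {α : Type} {S T : Set (α → ℕ)} (h : DefinableNatAdd S)
    (e : T = S) : DefinableNatAdd T := e ▸ h

lemma defin_exists {α β : Type} [Fintype α] [Fintype β] {S : Set ((α ⊕ β) → ℕ)}
    (h : DefinableNatAdd S) : DefinableNatAdd {x : α → ℕ | ∃ y : β → ℕ, Sum.elim x y ∈ S} := by
  have : {x : α → ℕ | ∃ y : β → ℕ, Sum.elim x y ∈ S} = (fun g : (α ⊕ β) → ℕ => g ∘ Sum.inl) '' S := by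
    ext x
    constructor
    · rintro ⟨y, hy⟩
      exact ⟨Sum.elim x y, hy, rfl⟩
    · rintro ⟨g, hg, rfl⟩
      refine ⟨g ∘ Sum.inr, ?_⟩
      have : Sum.elim (g ∘ Sum.inl) (g ∘ Sum.inr) = g := by
        funext z; cases z <;> rfl
      rwa [this]
  rw [this]
  exact Set.Definable.image_comp h Sum.inl

lemma defin_eq_const {α : Type} (v : α) (c : ℕ) : DefinableNatAdd {x : α → ℕ | x v = c} :=
  (defin_atom 0 c [v] []).congr (by ext x; simp)

lemma defin_eq_add {α : Type} (v w z : α) :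
    DefinableNatAdd {x : α → ℕ | x v = x w + x z} :=
  (defin_atom 0 0 [v] [w, z]).congr (by ext x; simp)

lemma defin_le {α : Type} [Fintype α] (v w : α) :
    DefinableNatAdd {x : α → ℕ | x v ≤ x w} := by
  have h := defin_exists (α := α) (β := Unit)
    ((defin_atom 0 0 [Sum.inl w] [Sum.inl v, Sum.inr ()]).congr rfl)
  refine h.congr ?_
  ext x
  simp only [Set.mem_setOf_eq, List.map_cons, List.map_nil, List.sum_cons, List.sum_nil,
    Sum.elim_inl, Sum.elim_inr, zero_add, add_zero]
  constructor
  · intro hxy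
    exact ⟨fun _ => x w - x v, by simp; omega⟩
  · rintro ⟨y, hy⟩; omega

lemma defin_ap {α : Type} [Fintype α] (v : α) (c p : ℕ) :
    DefinableNatAdd {x : α → ℕ | ∃ u : ℕ, x v = c + p * u} := by
  have h := defin_exists (α := α) (β := Unit)
    (defin_atom (α := α ⊕ Unit) 0 c [Sum.inl v] (List.replicate p (Sum.inr ())))
  refine h.congr ?_
  ext x
  simp only [Set.mem_setOf_eq, List.map_cons, List.map_nil, List.sum_cons, List.sum_nil,
    Sum.elim_inl, zero_add, add_zero, List.map_replicate, Sum.elim_inr, List.sum_replicate,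
    smul_eq_mul]
  constructor
  · rintro ⟨u, hu⟩; exact ⟨fun _ => u, by simp [hu, mul_comm]⟩
  · rintro ⟨y, hy⟩; exact ⟨y (), by simp [hy, mul_comm]⟩

lemma periodic_iter {E : Set ℕ} {s p : ℕ}
    (hper : ∀ t, s ≤ t → (t + p ∈ E ↔ t ∈ E)) :
    ∀ (u t : ℕ), s ≤ t → (t + p * u ∈ E ↔ t ∈ E) := by
  intro u
  induction u with
  | zero => intro t _; simp
  | succ u ih =>
      intro t ht
      have h1 : t + p * (u + 1) = (t + p) + p * u := by ring
      rw [h1, ih (t + p) (by omega), hper t ht]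

open Classical in
lemma defin_mem_periodic {α : Type} [Fintype α] (v : α) (E : Set ℕ) (s p : ℕ) (hp : 0 < p)
    (hper : ∀ t, s ≤ t → (t + p ∈ E ↔ t ∈ E)) :
    DefinableNatAdd {x : α → ℕ | x v ∈ E} := by
  have hEq : {x : α → ℕ | x v ∈ E} =
      (⋃ t ∈ Finset.range s, if t ∈ E then {x : α → ℕ | x v = t} else ∅) ∪
      (⋃ r ∈ Finset.range p, if s + r ∈ E then {x : α → ℕ | ∃ u : ℕ, x v = (s + r) + p * u} else ∅) := by
    ext x
    simp only [Set.mem_setOf_eq, Set.mem_union, Set.mem_iUnion, Finset.mem_range]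
    constructor
    · intro hx
      by_cases hlt : x v < s
      · exact Or.inl ⟨x v, hlt, by simp [hx]⟩
      · push_neg at hlt
        refine Or.inr ⟨(x v - s) % p, Nat.mod_lt _ hp, ?_⟩
        have hx2 : x v = (s + (x v - s) % p) + p * ((x v - s) / p) := by
          have := Nat.mod_add_div (x v - s) p
          omega
        have hmem : s + (x v - s) % p ∈ E := by
          rw [← periodic_iter hper ((x v - s) / p) _ (by omega), ← hx2]; exact hx
        rw [if_pos hmem]
        exact ⟨(x v - s) / p, hx2⟩
    · rintro (⟨t, _, hx⟩ | ⟨r, _, hx⟩)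
      · by_cases ht : t ∈ E
        · rw [if_pos ht] at hx; rw [Set.mem_setOf_eq] at hx; rwa [hx]
        · rw [if_neg ht] at hx; exact absurd hx (Set.notMem_empty x)
      · by_cases hr : s + r ∈ E
        · rw [if_pos hr] at hx
          obtain ⟨u, hu⟩ := hx
          rw [hu, periodic_iter hper u _ (by omega)]
          exact hr
        · rw [if_neg hr] at hx; exact absurd hx (Set.notMem_empty x)
  rw [hEq]
  apply Set.Definable.union
  · apply Set.definable_biUnion_finset
    intro t
    by_cases ht : t ∈ E
    · simpa [ht, DefinableNatAdd] using defin_eq_const v t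
    · simp [ht]
  · apply Set.definable_biUnion_finset
    intro r
    by_cases hr : s + r ∈ E
    · simpa [hr, DefinableNatAdd] using defin_ap v (s + r) p
    · simp [hr]

lemma iter_eventually_periodic {Q : Type} [Fintype Q] (f : Q → Q) :
    ∃ s p : ℕ, 0 < p ∧ ∀ t, s ≤ t → f^[t + p] = f^[t] := by
  obtain ⟨a, b, hab, hfab⟩ := Finite.exists_ne_map_eq_of_infinite (fun t : ℕ => f^[t])
  rcases Nat.lt_or_ge a b with h | h
  · refine ⟨a, b - a, by omega, ?_⟩
    intro t ht
    obtain ⟨u, rfl⟩ := Nat.exists_eq_add_of_le ht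
    have h1 : a + u + (b - a) = u + b := by omega
    have h2 : a + u = u + a := by omega
    rw [h1, h2, Function.iterate_add, Function.iterate_add, hfab]
  · have h' : b < a := by omega
    refine ⟨b, a - b, by omega, ?_⟩
    intro t ht
    obtain ⟨u, rfl⟩ := Nat.exists_eq_add_of_le ht
    have h1 : b + u + (a - b) = u + a := by omega
    have h2 : b + u = u + b := by omega
    rw [h1, h2, Function.iterate_add, Function.iterate_add, hfab]

lemma evalZ_append_replicate_zero (d : ℤ) (w : List ℤ) (c : ℕ) :
    evalZ d (w ++ List.replicate c 0) = evalZ d w := by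
  induction w with
  | nil =>
      simp only [List.nil_append]
      induction c with
      | zero => rfl
      | succ c ih => simp [List.replicate_succ, evalZ, ih]
  | cons a w ih => simp [evalZ, ih]

lemma range_map_getD (w : List ℤ) (L : ℕ) (h : w.length ≤ L) :
    (List.range L).map (fun t => w.getD t 0) = w ++ List.replicate (L - w.length) 0 := by
  induction w generalizing L with
  | nil =>
      simp only [List.nil_append, List.length_nil, Nat.sub_zero]
      apply List.eq_replicate_iff.2
      constructor
      · simp
      · intro b hb
        simp only [List.mem_map, List.mem_range] at hb
        obtain ⟨t, _, rfl⟩ := hb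
        rfl
  | cons a w ih =>
      obtain ⟨L', rfl⟩ : ∃ L', L = L' + 1 := by
        cases L with
        | zero => simp at h
        | succ L' => exact ⟨L', rfl⟩
      rw [List.range_succ_eq_map, List.map_cons, List.map_map]
      have : (fun t => (a :: w).getD t 0) ∘ Nat.succ = fun t => w.getD t 0 := by
        funext t; rfl
      rw [this, ih L' (by simpa using h)]
      simp [List.getD_cons_zero]

section Word

variable {m : ℕ}

/-- The word (list over ℤ) of coordinate `i`, given block spec `B` and counts `k`. -/
def coordWord {κ : Type} (B : Fin m → List (ℤ × κ)) (k : κ → ℕ) (i : Fin m) : List ℤ :=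
  ((B i).map fun p => List.replicate (k p.2) p.1).flatten

def maxLen {κ : Type} (B : Fin m → List (ℤ × κ)) (k : κ → ℕ) : ℕ :=
  Finset.univ.sup fun i => (coordWord B k i).length

def wordOf {κ : Type} (B : Fin m → List (ℤ × κ)) (k : κ → ℕ) : List (Fin m → ℤ) :=
  (List.range (maxLen B k)).map fun t i => (coordWord B k i).getD t 0

/-- head letter of a block spec list (0 if empty) -/
def hdLetter {κ : Type} (l : List (ℤ × κ)) : ℤ := (l.head?.map Prod.fst).getD 0

/-- head variable of a block spec list (given default) -/
def hdVar {κ : Type} (v₀ : κ) (l : List (ℤ × κ)) : κ := (l.head?.map Prod.snd).getD v₀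

@[simp] lemma hdLetter_cons {κ : Type} (p : ℤ × κ) (l : List (ℤ × κ)) :
    hdLetter (p :: l) = p.1 := rfl
@[simp] lemma hdVar_cons {κ : Type} (v₀ : κ) (p : ℤ × κ) (l : List (ℤ × κ)) :
    hdVar v₀ (p :: l) = p.2 := rfl
@[simp] lemma hdLetter_nil {κ : Type} : hdLetter ([] : List (ℤ × κ)) = 0 := rfl
@[simp] lemma hdVar_nil {κ : Type} (v₀ : κ) : hdVar v₀ ([] : List (ℤ × κ)) = v₀ := rfl

end Word

section Split

variable {m : ℕ} {κ : Type}

/-- The residual block spec after consuming the first block of coordinate `i₀`. -/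
def resSpec (B : Fin m → List (ℤ × κ)) (i₀ : Fin m) : Fin m → List (ℤ × (κ ⊕ Fin m)) :=
  fun i =>
    if i = i₀ then ((B i₀).tail).map (fun p => (p.1, Sum.inl p.2))
    else match B i with
      | [] => []
      | (l, _) :: t => (l, Sum.inr i) :: t.map (fun p => (p.1, Sum.inl p.2))

/-- The residual counts. -/
def resCount (B : Fin m → List (ℤ × κ)) (i₀ : Fin m) (v_def : κ) (k : κ → ℕ) :
    (κ ⊕ Fin m) → ℕ :=
  Sum.elim k (fun i => k (hdVar v_def (B i)) - k (hdVar v_def (B i₀)))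

lemma resSpec_self (B : Fin m → List (ℤ × κ)) (i₀ : Fin m) :
    resSpec B i₀ i₀ = ((B i₀).tail).map (fun p => (p.1, Sum.inl p.2)) := by
  simp [resSpec]

lemma resSpec_ne_cons (B : Fin m → List (ℤ × κ)) {i₀ i : Fin m} (hi : i ≠ i₀)
    {p : ℤ × κ} {t : List (ℤ × κ)} (h : B i = p :: t) :
    resSpec B i₀ i = (p.1, Sum.inr i) :: t.map (fun q => (q.1, Sum.inl q.2)) := by
  simp [resSpec, hi, h]

lemma resSpec_ne_nil (B : Fin m → List (ℤ × κ)) {i₀ i : Fin m} (hi : i ≠ i₀)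
    (h : B i = []) : resSpec B i₀ i = [] := by
  simp [resSpec, hi, h]

lemma coordWord_cons (B : Fin m → List (ℤ × κ)) (k : κ → ℕ) (i : Fin m)
    {p : ℤ × κ} {t : List (ℤ × κ)} (h : B i = p :: t) :
    coordWord B k i = List.replicate (k p.2) p.1
      ++ (t.map fun q => List.replicate (k q.2) q.1).flatten := by
  rw [coordWord, h, List.map_cons, List.flatten_cons]

lemma coordWord_nil (B : Fin m → List (ℤ × κ)) (k : κ → ℕ) (i : Fin m) (h : B i = []) :
    coordWord B k i = [] := by
  rw [coordWord, h]; rfl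

lemma coordWord_resSpec (B : Fin m → List (ℤ × κ)) (k : κ → ℕ) (v_def : κ) (i₀ : Fin m)
    (h₀ : B i₀ ≠ []) (hC : ∀ i, B i ≠ [] → k (hdVar v_def (B i₀)) ≤ k (hdVar v_def (B i)))
    (i : Fin m) :
    coordWord (resSpec B i₀) (resCount B i₀ v_def k) i
      = (coordWord B k i).drop (k (hdVar v_def (B i₀))) := by
  obtain ⟨p₀, tl₀, h₀'⟩ := List.exists_cons_of_ne_nil h₀
  have hcv : k (hdVar v_def (B i₀)) = k p₀.2 := by rw [h₀', hdVar_cons]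
  by_cases hi : i = i₀
  · subst hi
    rw [coordWord_cons B k i h₀', hcv, List.drop_left' List.length_replicate]
    rw [coordWord, resSpec_self, h₀', List.tail_cons, List.map_map]
    congr 1
  · rcases eq_or_ne (B i) [] with hBi | hBi
    · rw [coordWord_nil B k i hBi, coordWord, resSpec_ne_nil B hi hBi]
      simp
    · obtain ⟨p, t, hBi'⟩ := List.exists_cons_of_ne_nil hBi
      have hle : k (hdVar v_def (B i₀)) ≤ k p.2 := by
        have h2 := hC i hBi
        rw [hBi'] at h2
        simpa using h2
      rw [coordWord_cons B k i hBi']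
      rw [coordWord, resSpec_ne_cons B hi hBi']
      simp only [List.map_cons, List.flatten_cons, List.map_map]
      have hsplit : List.replicate (k p.2) p.1
          = List.replicate (k (hdVar v_def (B i₀))) p.1
            ++ List.replicate (k p.2 - k (hdVar v_def (B i₀))) p.1 := by
        rw [← List.replicate_add]; congr 1; omega
      rw [hsplit, List.append_assoc, List.drop_left' List.length_replicate]
      have h1 : resCount B i₀ v_def k (Sum.inr i) = k p.2 - k (hdVar v_def (B i₀)) := by
        simp only [resCount, Sum.elim_inr, hBi', hdVar_cons]
      rw [h1]
      congr 1

lemma length_coordWord_ge (B : Fin m → List (ℤ × κ)) (k : κ → ℕ) (v_def : κ) (i : Fin m)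
    (h : B i ≠ []) : k (hdVar v_def (B i)) ≤ (coordWord B k i).length := by
  obtain ⟨p, t, h'⟩ := List.exists_cons_of_ne_nil h
  rw [coordWord_cons B k i h', h', hdVar_cons]
  simp only [List.length_append, List.length_replicate]
  omega

lemma maxLen_split (B : Fin m → List (ℤ × κ)) (k : κ → ℕ) (v_def : κ) (i₀ : Fin m)
    (h₀ : B i₀ ≠ []) (hC : ∀ i, B i ≠ [] → k (hdVar v_def (B i₀)) ≤ k (hdVar v_def (B i))) :
    maxLen B k = k (hdVar v_def (B i₀)) + maxLen (resSpec B i₀) (resCount B i₀ v_def k) := by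
  have hlen : ∀ i, (coordWord (resSpec B i₀) (resCount B i₀ v_def k) i).length
      = (coordWord B k i).length - k (hdVar v_def (B i₀)) := by
    intro i
    rw [coordWord_resSpec B k v_def i₀ h₀ hC i, List.length_drop]
  apply le_antisymm
  · apply Finset.sup_le
    intro i _
    rcases eq_or_ne (B i) [] with hBi | hBi
    · rw [coordWord_nil B k i hBi]; simp
    · have h1 := length_coordWord_ge B k v_def i hBi
      have h2 := hC i hBi
      have h3 := hlen i
      have h4 : (coordWord (resSpec B i₀) (resCount B i₀ v_def k) i).length
          ≤ maxLen (resSpec B i₀) (resCount B i₀ v_def k) :=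
        Finset.le_sup (f := fun i => (coordWord (resSpec B i₀) (resCount B i₀ v_def k) i).length)
          (Finset.mem_univ i)
      omega
  · obtain ⟨j, _, hj⟩ := Finset.exists_mem_eq_sup (Finset.univ : Finset (Fin m))
      ⟨i₀, Finset.mem_univ i₀⟩
      (fun i => (coordWord (resSpec B i₀) (resCount B i₀ v_def k) i).length)
    have hsup : maxLen (resSpec B i₀) (resCount B i₀ v_def k)
        = (coordWord (resSpec B i₀) (resCount B i₀ v_def k) j).length := hj
    have hjlen := hlen j
    have hBle : (coordWord B k j).length ≤ maxLen B k :=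
      Finset.le_sup (f := fun i => (coordWord B k i).length) (Finset.mem_univ j)
    have hi₀le : (coordWord B k i₀).length ≤ maxLen B k :=
      Finset.le_sup (f := fun i => (coordWord B k i).length) (Finset.mem_univ i₀)
    have hi₀ := length_coordWord_ge B k v_def i₀ h₀
    rcases eq_or_ne (B j) [] with hBj | hBj
    · rcases eq_or_ne j i₀ with rfl | hji
      · exact absurd hBj h₀
      · have : coordWord (resSpec B i₀) (resCount B i₀ v_def k) j = [] := by
          rw [coordWord, resSpec_ne_nil B hji hBj]; rfl
        rw [hsup, this]
        simp only [List.length_nil, Nat.add_zero]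
        omega
    · have h1 := length_coordWord_ge B k v_def j hBj
      have h2 := hC j hBj
      rw [hsup]
      omega

end Split

section WordSplit

variable {m : ℕ} {κ : Type}

lemma getD_coordWord_lt (B : Fin m → List (ℤ × κ)) (k : κ → ℕ) (v_def : κ) (i₀ : Fin m)
    (hC : ∀ i, B i ≠ [] → k (hdVar v_def (B i₀)) ≤ k (hdVar v_def (B i)))
    (i : Fin m) (t : ℕ) (ht : t < k (hdVar v_def (B i₀))) :
    (coordWord B k i).getD t 0 = hdLetter (B i) := by
  rcases eq_or_ne (B i) [] with hBi | hBi
  · rw [coordWord_nil B k i hBi, hBi]; rfl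
  · obtain ⟨p, tl, hBi'⟩ := List.exists_cons_of_ne_nil hBi
    have hle : k (hdVar v_def (B i₀)) ≤ k p.2 := by
      have h2 := hC i hBi
      rw [hBi'] at h2
      simpa using h2
    rw [coordWord_cons B k i hBi', hBi', hdLetter_cons]
    rw [List.getD_append _ _ _ _ (by simp; omega)]
    rw [List.getD_eq_getElem _ _ (by simp; omega)]
    simp

lemma wordOf_split (B : Fin m → List (ℤ × κ)) (k : κ → ℕ) (v_def : κ) (i₀ : Fin m)
    (h₀ : B i₀ ≠ []) (hC : ∀ i, B i ≠ [] → k (hdVar v_def (B i₀)) ≤ k (hdVar v_def (B i))) :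
    wordOf B k = List.replicate (k (hdVar v_def (B i₀))) (fun i => hdLetter (B i))
      ++ wordOf (resSpec B i₀) (resCount B i₀ v_def k) := by
  rw [wordOf, maxLen_split B k v_def i₀ h₀ hC, List.range_add, List.map_append, List.map_map]
  congr 1
  · apply List.eq_replicate_iff.2
    refine ⟨by simp, ?_⟩
    intro b hb
    simp only [List.mem_map, List.mem_range] at hb
    obtain ⟨t, ht, rfl⟩ := hb
    funext i
    exact getD_coordWord_lt B k v_def i₀ hC i t ht
  · rw [wordOf]
    apply List.map_congr_left
    intro t _
    funext i
    have hdrop := coordWord_resSpec B k v_def i₀ h₀ hC i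
    rw [hdrop]
    show (coordWord B k i).getD (k (hdVar v_def (B i₀)) + t) 0
      = ((coordWord B k i).drop (k (hdVar v_def (B i₀)))).getD t 0
    simp only [List.getD, List.getD_eq_getElem?_getD, List.getElem?_drop]

lemma evalFrom_replicate {α Q : Type} (M : DFA α Q) (q : Q) (c : ℕ) (a : α) :
    M.evalFrom q (List.replicate c a) = (fun s => M.step s a)^[c] q := by
  induction c generalizing q with
  | zero => rfl
  | succ c ih =>
      rw [List.replicate_succ, Function.iterate_succ_apply]
      exact ih _

lemma evalFrom_append {α Q : Type} (M : DFA α Q) (q : Q) (x y : List α) :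
    M.evalFrom q (x ++ y) = M.evalFrom (M.evalFrom q x) y :=
  List.foldl_append

end WordSplit

section Main

variable {m : ℕ} {κ : Type}

lemma coordWord_congr {κ' : Type} (B : Fin m → List (ℤ × κ')) (k₁ k₂ : κ' → ℕ)
    (h : ∀ i p, p ∈ B i → k₁ p.2 = k₂ p.2) (i : Fin m) :
    coordWord B k₁ i = coordWord B k₂ i := by
  rw [coordWord, coordWord]
  congr 1
  apply List.map_congr_left
  intro p hp
  rw [h i p hp]

lemma wordOf_congr {κ' : Type} (B : Fin m → List (ℤ × κ')) (k₁ k₂ : κ' → ℕ)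
    (h : ∀ i p, p ∈ B i → k₁ p.2 = k₂ p.2) :
    wordOf B k₁ = wordOf B k₂ := by
  have hc : ∀ i, coordWord B k₁ i = coordWord B k₂ i := coordWord_congr B k₁ k₂ h
  rw [wordOf, wordOf, maxLen, maxLen]
  have : (fun i => (coordWord B k₁ i).length) = fun i => (coordWord B k₂ i).length := by
    funext i; rw [hc i]
  rw [this]
  apply List.map_congr_left
  intro t _
  funext i
  rw [hc i]

lemma wordOf_nil_of_empty {κ' : Type} (B : Fin m → List (ℤ × κ')) (k : κ' → ℕ)
    (h : ∀ i, B i = []) : wordOf B k = [] := by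
  have hm : maxLen B k = 0 := by
    apply Nat.le_antisymm _ (Nat.zero_le _)
    apply Finset.sup_le
    intro i _
    rw [coordWord_nil B k i (h i)]
    simp
  rw [wordOf, hm]
  rfl

lemma defin_of_empty {Q : Type} (M : DFA (Fin m → ℤ) Q) (κ' : Type)
    (B : Fin m → List (ℤ × κ')) (h : ∀ i, B i = []) (q : Q) :
    DefinableNatAdd {k : κ' → ℕ | M.evalFrom q (wordOf B k) ∈ M.accept} := by
  by_cases hq : q ∈ M.accept
  · have : {k : κ' → ℕ | M.evalFrom q (wordOf B k) ∈ M.accept} = Set.univ := by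
      ext k
      simp [wordOf_nil_of_empty B k h, DFA.evalFrom, hq]
    rw [this]
    exact Set.definable_univ
  · have : {k : κ' → ℕ | M.evalFrom q (wordOf B k) ∈ M.accept} = ∅ := by
      ext k
      simp [wordOf_nil_of_empty B k h, DFA.evalFrom, hq]
    rw [this]
    exact Set.definable_empty

lemma resSpec_sum_length (B : Fin m → List (ℤ × κ)) (i₀ : Fin m) (h₀ : B i₀ ≠ []) :
    (∑ i, (resSpec B i₀ i).length) + 1 ≤ ∑ i, (B i).length := by
  have key : ∀ i, (resSpec B i₀ i).length + (if i = i₀ then 1 else 0) ≤ (B i).length := by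
    intro i
    by_cases hi : i = i₀
    · subst hi
      rw [if_pos rfl, resSpec_self, List.length_map, List.length_tail]
      have : 0 < (B i).length := List.length_pos_iff.2 h₀
      omega
    · simp only [if_neg hi]
      rcases eq_or_ne (B i) [] with hBi | hBi
      · rw [resSpec_ne_nil B hi hBi, hBi]; simp
      · obtain ⟨p, t, hBi'⟩ := List.exists_cons_of_ne_nil hBi
        rw [resSpec_ne_cons B hi hBi', hBi']
        simp
  calc (∑ i, (resSpec B i₀ i).length) + 1
      = ∑ i, ((resSpec B i₀ i).length + (if i = i₀ then 1 else 0)) := by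
        rw [Finset.sum_add_distrib, Finset.sum_ite_eq' Finset.univ i₀ (fun _ => 1)]
        simp
    _ ≤ ∑ i, (B i).length := Finset.sum_le_sum (fun i _ => key i)

lemma mem_resSpec_inr (B : Fin m → List (ℤ × κ)) (i₀ i : Fin m) (i' : Fin m)
    (p : ℤ × (κ ⊕ Fin m)) (hp : p ∈ resSpec B i₀ i) (h2 : p.2 = Sum.inr i') :
    i' = i ∧ i ≠ i₀ ∧ B i ≠ [] := by
  by_cases hi : i = i₀
  · subst hi
    rw [resSpec_self] at hp
    obtain ⟨p', _, rfl⟩ := List.mem_map.1 hp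
    simp at h2
  · rcases eq_or_ne (B i) [] with hBi | hBi
    · rw [resSpec_ne_nil B hi hBi] at hp
      simp at hp
    · obtain ⟨pp, tt, hBi'⟩ := List.exists_cons_of_ne_nil hBi
      rw [resSpec_ne_cons B hi hBi'] at hp
      rcases List.mem_cons.1 hp with rfl | hp'
      · simp at h2
        exact ⟨h2.symm, hi, hBi⟩
      · obtain ⟨p', _, rfl⟩ := List.mem_map.1 hp'
        simp at h2

lemma wordOf_resSpec_elim (B : Fin m → List (ℤ × κ)) (i₀ : Fin m) (v_def : κ)
    (k : κ → ℕ) (y : Fin m → ℕ)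
    (hy : ∀ i, B i ≠ [] → i ≠ i₀ →
      y i = k (hdVar v_def (B i)) - k (hdVar v_def (B i₀))) :
    wordOf (resSpec B i₀) (Sum.elim k y) = wordOf (resSpec B i₀) (resCount B i₀ v_def k) := by
  apply wordOf_congr
  intro i p hp
  rcases hp2 : p.2 with v | i'
  · rfl
  · obtain ⟨rfl, hne, hBne⟩ := mem_resSpec_inr B i₀ i i' p hp hp2
    simp only [Sum.elim_inr, resCount]
    exact hy i' hBne hne

open Classical in
lemma main_lemma {Q : Type} [Fintype Q] (M : DFA (Fin m → ℤ) Q) (N : ℕ) :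
    ∀ (κ' : Type) [Fintype κ'] (B : Fin m → List (ℤ × κ')), (∑ i, (B i).length) ≤ N →
    ∀ q : Q, DefinableNatAdd {k : κ' → ℕ | M.evalFrom q (wordOf B k) ∈ M.accept} := by
  induction N with
  | zero =>
      intro κ' _ B hB q
      have hempty : ∀ i, B i = [] := by
        intro i
        have h1 : (B i).length ≤ ∑ j, (B j).length :=
          Finset.single_le_sum (f := fun j => (B j).length) (fun _ _ => Nat.zero_le _)
            (Finset.mem_univ i)
        have : (B i).length = 0 := by omega
        exact List.length_eq_zero_iff.1 this
      exact defin_of_empty M κ' B hempty q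
  | succ N ih =>
      intro κ' _ B hB q
      by_cases hall : ∀ i, B i = []
      · exact defin_of_empty M κ' B hall q
      · push_neg at hall
        obtain ⟨iw, hiw⟩ := hall
        obtain ⟨pw, tw, hwit⟩ := List.exists_cons_of_ne_nil hiw
        set v_def : κ' := pw.2 with hv_def
        have hdv : Fin m → κ' := fun i => hdVar v_def (B i)
        set F : Finset (Fin m) := Finset.univ.filter (fun i => B i ≠ []) with hF
        have hiwF : iw ∈ F := Finset.mem_filter.2 ⟨Finset.mem_univ iw, hiw⟩
        -- the union decomposition, with empty guard for non-F indices
        let stepA : Q → Q := fun s => M.step s (fun i => hdLetter (B i))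
        let G : Fin m → Set (κ' → ℕ) := fun i₀ =>
          if B i₀ = [] then ∅ else
          ((⋂ i ∈ F, {k : κ' → ℕ | k (hdVar v_def (B i₀)) ≤ k (hdVar v_def (B i))}) ∩
            ⋃ q' ∈ (Finset.univ : Finset Q),
              ({k : κ' → ℕ | stepA^[k (hdVar v_def (B i₀))] q = q'} ∩
               {k : κ' → ℕ | ∃ y : Fin m → ℕ, Sum.elim k y ∈
                  ({k'' : (κ' ⊕ Fin m) → ℕ |
                      M.evalFrom q' (wordOf (resSpec B i₀) k'') ∈ M.accept} ∩
                   ⋂ i ∈ (Finset.univ : Finset (Fin m)),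
                     (if B i = [] then {y' : (κ' ⊕ Fin m) → ℕ | y' (Sum.inr i) = 0}
                      else {y' : (κ' ⊕ Fin m) → ℕ |
                        y' (Sum.inl (hdVar v_def (B i)))
                          = y' (Sum.inr i) + y' (Sum.inl (hdVar v_def (B i₀)))}))}))
        have hmain : {k : κ' → ℕ | M.evalFrom q (wordOf B k) ∈ M.accept} = ⋃ i₀ ∈ F, G i₀ := by
          ext k
          simp only [Set.mem_setOf_eq, Set.mem_iUnion, exists_prop]
          constructor
          · intro hk
            obtain ⟨i₀, hi₀F, hmin⟩ := Finset.exists_min_image F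
              (fun i => k (hdVar v_def (B i))) ⟨iw, hiwF⟩
            have hB₀ : B i₀ ≠ [] := (Finset.mem_filter.1 hi₀F).2
            have hCond : ∀ i, B i ≠ [] → k (hdVar v_def (B i₀)) ≤ k (hdVar v_def (B i)) := by
              intro i hi
              exact hmin i (Finset.mem_filter.2 ⟨Finset.mem_univ i, hi⟩)
            refine ⟨i₀, hi₀F, ?_⟩
            show k ∈ G i₀
            rw [show G i₀ = _ from if_neg hB₀]
            constructor
            · apply Set.mem_iInter₂.2
              intro i hiF
              exact hCond i (Finset.mem_filter.1 hiF).2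
            · apply Set.mem_iUnion₂.2
              refine ⟨stepA^[k (hdVar v_def (B i₀))] q, Finset.mem_univ _, rfl, ?_⟩
              set y : Fin m → ℕ :=
                fun i => if B i = [] then 0
                  else k (hdVar v_def (B i)) - k (hdVar v_def (B i₀)) with hy
              refine ⟨y, ?_, ?_⟩
              · show M.evalFrom _ (wordOf (resSpec B i₀) (Sum.elim k y)) ∈ M.accept
                rw [wordOf_resSpec_elim B i₀ v_def k y ?hy]
                case hy =>
                  intro i hBne _
                  rw [hy]
                  simp only [if_neg hBne]
                have hsplit := wordOf_split B k v_def i₀ hB₀ hCond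
                rw [hsplit, evalFrom_append, evalFrom_replicate] at hk
                exact hk
              · apply Set.mem_iInter₂.2
                intro i _
                by_cases hBi : B i = []
                · rw [if_pos hBi]
                  show Sum.elim k y (Sum.inr i) = 0
                  simp only [Sum.elim_inr, hy, if_pos hBi]
                · rw [if_neg hBi]
                  show Sum.elim k y (Sum.inl (hdVar v_def (B i)))
                    = Sum.elim k y (Sum.inr i) + Sum.elim k y (Sum.inl (hdVar v_def (B i₀)))
                  simp only [Sum.elim_inl, Sum.elim_inr, hy, if_neg hBi]
                  have := hCond i hBi
                  omega
          · rintro ⟨i₀, hi₀F, hkG⟩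
            have hB₀ : B i₀ ≠ [] := (Finset.mem_filter.1 hi₀F).2
            rw [show G i₀ = _ from if_neg hB₀] at hkG
            obtain ⟨hkC, hkU⟩ := hkG
            obtain ⟨q', _, hq', y, hyT, hyEQ⟩ := Set.mem_iUnion₂.1 hkU
            have hCond : ∀ i, B i ≠ [] → k (hdVar v_def (B i₀)) ≤ k (hdVar v_def (B i)) := by
              intro i hi
              exact Set.mem_iInter₂.1 hkC i (Finset.mem_filter.2 ⟨Finset.mem_univ i, hi⟩)
            have hsplit := wordOf_split B k v_def i₀ hB₀ hCond
            rw [hsplit, evalFrom_append, evalFrom_replicate]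
            have hq'' : stepA^[k (hdVar v_def (B i₀))] q = q' := hq'
            rw [hq'']
            have hy : ∀ i, B i ≠ [] → i ≠ i₀ →
                y i = k (hdVar v_def (B i)) - k (hdVar v_def (B i₀)) := by
              intro i hBne _
              have hEQi := Set.mem_iInter₂.1 hyEQ i (Finset.mem_univ i)
              rw [if_neg hBne] at hEQi
              have : Sum.elim k y (Sum.inl (hdVar v_def (B i)))
                  = Sum.elim k y (Sum.inr i) + Sum.elim k y (Sum.inl (hdVar v_def (B i₀))) := hEQi
              simp only [Sum.elim_inl, Sum.elim_inr] at this
              omega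
            rw [← wordOf_resSpec_elim B i₀ v_def k y hy]
            exact hyT
        rw [hmain]
        apply Set.definable_biUnion_finset
        intro i₀
        show DefinableNatAdd (G i₀)
        by_cases hB₀ : B i₀ = []
        · rw [show G i₀ = _ from if_pos hB₀]
          exact Set.definable_empty
        · rw [show G i₀ = _ from if_neg hB₀]
          apply Set.Definable.inter
          · apply Set.definable_biInter_finset
            intro i
            exact defin_le (hdVar v_def (B i₀)) (hdVar v_def (B i))
          · apply Set.definable_biUnion_finset
            intro q'
            apply Set.Definable.inter
            · obtain ⟨s, p, hp, hper⟩ := iter_eventually_periodic stepA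
              apply defin_mem_periodic (hdVar v_def (B i₀)) {t | stepA^[t] q = q'} s p hp
              intro t ht
              simp only [Set.mem_setOf_eq, hper t ht]
            · apply defin_exists
              apply Set.Definable.inter
              · apply ih
                have := resSpec_sum_length B i₀ hB₀
                omega
              · apply Set.definable_biInter_finset
                intro i
                by_cases hBi : B i = []
                · rw [if_pos hBi]
                  exact defin_eq_const (Sum.inr i) 0
                · rw [if_neg hBi]
                  exact defin_eq_add (Sum.inl (hdVar v_def (B i))) (Sum.inr i)
                    (Sum.inl (hdVar v_def (B i₀)))

end Main

section Assemble

variable {m : ℕ} {κ : Type}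

lemma evalVec_wordOf (d : ℤ) (B : Fin m → List (ℤ × κ)) (k : κ → ℕ) (i : Fin m) :
    evalVec d (wordOf B k) i = evalZ d (coordWord B k i) := by
  rw [evalVec, wordOf, List.map_map]
  have h1 : ((fun v : Fin m → ℤ => v i) ∘ fun t i => (coordWord B k i).getD t 0)
      = fun t => (coordWord B k i).getD t 0 := rfl
  have hle : (coordWord B k i).length ≤ maxLen B k :=
    Finset.le_sup (f := fun i => (coordWord B k i).length) (Finset.mem_univ i)
  rw [h1, range_map_getD _ _ hle, evalZ_append_replicate_zero]

lemma mem_coordWord (B : Fin m → List (ℤ × κ)) (k : κ → ℕ) (i : Fin m) (x : ℤ)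
    (hx : x ∈ coordWord B k i) : ∃ p ∈ B i, x = p.1 := by
  rw [coordWord] at hx
  obtain ⟨l, hl, hxl⟩ := List.mem_flatten.1 hx
  obtain ⟨p, hp, rfl⟩ := List.mem_map.1 hl
  exact ⟨p, hp, (List.eq_of_mem_replicate hxl)⟩

end Assemble

theorem stmt15 (d : ℕ) (hd : 2 ≤ d) (m : ℕ) (hm : 1 ≤ m)
    (X : Set (Fin m → ℤ)) (hX : AutomaticVec d X)
    (n : Fin m → ℕ) (ℓ : (i : Fin m) → Fin (n i) → ℤ)
    (hℓ : ∀ i j, (ℓ i j).natAbs ≤ d - 1) :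
    DefinableNatAdd {k : ((i : Fin m) × Fin (n i)) → ℕ |
      (fun i : Fin m =>
        evalZ d (List.ofFn fun j : Fin (n i) => List.replicate (k ⟨i, j⟩) (ℓ i j)).flatten) ∈ X} := by
  obtain ⟨Q, fQ, M, hM⟩ := hX
  set κ : Type := (i : Fin m) × Fin (n i) with hκ
  set B₀ : Fin m → List (ℤ × κ) := fun i => List.ofFn (fun j => (ℓ i j, ⟨i, j⟩)) with hB₀
  have hcoord : ∀ (k : κ → ℕ) (i : Fin m), coordWord B₀ k i
      = (List.ofFn fun j : Fin (n i) => List.replicate (k ⟨i, j⟩) (ℓ i j)).flatten := by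
    intro k i
    rw [coordWord, hB₀, List.map_ofFn]
    rfl
  have hbounds : ∀ (k : κ → ℕ), ∀ v ∈ wordOf B₀ k, ∀ i, (v i).natAbs ≤ d - 1 := by
    intro k v hv i
    rw [wordOf] at hv
    obtain ⟨t, _, rfl⟩ := List.mem_map.1 hv
    show ((coordWord B₀ k i).getD t 0).natAbs ≤ d - 1
    by_cases ht : t < (coordWord B₀ k i).length
    · rw [List.getD_eq_getElem _ _ ht]
      have hmem : (coordWord B₀ k i)[t] ∈ coordWord B₀ k i := List.getElem_mem ht
      obtain ⟨p, hp, hpe⟩ := mem_coordWord B₀ k i _ hmem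
      rw [hpe]
      rw [hB₀] at hp
      obtain ⟨j, hj⟩ := List.mem_ofFn.1 hp
      rw [← hj]
      exact hℓ i j
    · rw [List.getD_eq_default _ _ (by omega)]
      simp
  have hset : {k : κ → ℕ |
      (fun i : Fin m =>
        evalZ d (List.ofFn fun j : Fin (n i) => List.replicate (k ⟨i, j⟩) (ℓ i j)).flatten) ∈ X}
      = {k : κ → ℕ | M.evalFrom M.start (wordOf B₀ k) ∈ M.accept} := by
    ext k
    simp only [Set.mem_setOf_eq]
    have h1 : (fun i : Fin m =>
        evalZ d (List.ofFn fun j : Fin (n i) => List.replicate (k ⟨i, j⟩) (ℓ i j)).flatten)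
        = evalVec d (wordOf B₀ k) := by
      funext i
      rw [evalVec_wordOf, hcoord]
    rw [h1]
    have h2 : M.evalFrom M.start (wordOf B₀ k) ∈ M.accept ↔ wordOf B₀ k ∈ M.accepts :=
      (DFA.mem_accepts M).symm
    rw [h2, hM]
    show _ ↔ (∀ v ∈ wordOf B₀ k, ∀ i, (v i).natAbs ≤ d - 1) ∧ evalVec d (wordOf B₀ k) ∈ X
    constructor
    · intro hx
      exact ⟨hbounds k, hx⟩
    · intro hx
      exact hx.2
  rw [hset]
  exact main_lemma M (∑ i, (B₀ i).length) κ B₀ le_rfl M.start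
end

section
/- Fix an integer d ≥ 8. Then the map ℕ³ → ℤ given by (x, y, z) ↦ (d^x − 1)/(d − 1) + 2·(d^y − 1)/(d − 1) + 4·(d^z − 1)/(d − 1) is injective. -/
theorem stmt17 (d : ℤ) (hd : 8 ≤ d) :
    Function.Injective (fun t : ℕ × ℕ × ℕ =>
      (∑ i ∈ Finset.range t.1, d ^ i) + 2 * (∑ i ∈ Finset.range t.2.1, d ^ i) +
        4 * (∑ i ∈ Finset.range t.2.2, d ^ i)) := by
  have hd0 : (0:ℤ) < d := by linarith
  set S : ℕ → ℤ := fun n => ∑ i ∈ Finset.range n, d ^ i with hS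
  have hSnn : ∀ n, 0 ≤ S n := fun n => Finset.sum_nonneg (fun i _ => by positivity)
  have hrec : ∀ n, S n = (if n = 0 then 0 else 1) + d * S (n - 1) := by
    intro n
    cases n with
    | zero => simp [hS]
    | succ m =>
      simp only [hS, geom_sum_succ, Nat.succ_ne_zero, if_false, Nat.succ_sub_one]
      ring
  have key : ∀ x y z x' y' z' : ℕ,
      S x + 2 * S y + 4 * S z = S x' + 2 * S y' + 4 * S z' →
      ((x = 0 ↔ x' = 0) ∧ (y = 0 ↔ y' = 0) ∧ (z = 0 ↔ z' = 0)) ∧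
      S (x-1) + 2 * S (y-1) + 4 * S (z-1) = S (x'-1) + 2 * S (y'-1) + 4 * S (z'-1) := by
    intro x y z x' y' z' h
    rw [hrec x, hrec y, hrec z, hrec x', hrec y', hrec z'] at h
    set bx : ℤ := if x = 0 then 0 else 1 with hbx
    set by' : ℤ := if y = 0 then 0 else 1 with hby
    set bz : ℤ := if z = 0 then 0 else 1 with hbz
    set bx' : ℤ := if x' = 0 then 0 else 1 with hbx'
    set by'' : ℤ := if y' = 0 then 0 else 1 with hby'
    set bz' : ℤ := if z' = 0 then 0 else 1 with hbz'
    have hbounds : (0 ≤ bx ∧ bx ≤ 1) ∧ (0 ≤ by' ∧ by' ≤ 1) ∧ (0 ≤ bz ∧ bz ≤ 1) ∧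
        (0 ≤ bx' ∧ bx' ≤ 1) ∧ (0 ≤ by'' ∧ by'' ≤ 1) ∧ (0 ≤ bz' ∧ bz' ≤ 1) := by
      simp only [hbx, hby, hbz, hbx', hby', hbz']
      split_ifs <;> omega
    set c : ℤ := bx + 2 * by' + 4 * bz with hc
    set c' : ℤ := bx' + 2 * by'' + 4 * bz' with hc'
    set q : ℤ := S (x-1) + 2 * S (y-1) + 4 * S (z-1) with hq
    set q' : ℤ := S (x'-1) + 2 * S (y'-1) + 4 * S (z'-1) with hq'
    have h' : c + d * q = c' + d * q' := by
      rw [hc, hc', hq, hq']; ring_nf; ring_nf at h; linarith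
    have hdvd : d ∣ c - c' := ⟨q' - q, by linarith⟩
    have hcc : c = c' := by
      have habs : |c - c'| < d := by
        rw [abs_lt]; constructor <;> [skip; skip] <;>
          (rw [hc, hc']; obtain ⟨⟨a1,a2⟩,⟨a3,a4⟩,⟨a5,a6⟩,⟨a7,a8⟩,⟨a9,a10⟩,⟨a11,a12⟩⟩ := hbounds; linarith)
      have := Int.eq_zero_of_abs_lt_dvd hdvd habs
      linarith
    have hqq : q = q' := by
      have : d * q = d * q' := by linarith
      exact mul_left_cancel₀ (by linarith) this
    refine ⟨?_, hqq⟩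
    have hceq : bx + 2 * by' + 4 * bz = bx' + 2 * by'' + 4 * bz' := hcc
    obtain ⟨⟨a1,a2⟩,⟨a3,a4⟩,⟨a5,a6⟩,⟨a7,a8⟩,⟨a9,a10⟩,⟨a11,a12⟩⟩ := hbounds
    have e1 : bx = bx' ∧ by' = by'' ∧ bz = bz' := by omega
    simp only [hbx, hbx', hby, hby', hbz, hbz'] at e1
    obtain ⟨e1, e2, e3⟩ := e1
    refine ⟨?_, ?_, ?_⟩ <;> constructor <;> intro hh <;>
      [skip; skip; skip; skip; skip; skip] <;> first
      | (by_contra hcon; simp [hh, hcon] at e1 e2 e3)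
  suffices H : ∀ N : ℕ, ∀ x y z x' y' z' : ℕ, x + y + z ≤ N →
      S x + 2 * S y + 4 * S z = S x' + 2 * S y' + 4 * S z' →
      x = x' ∧ y = y' ∧ z = z' by
    rintro ⟨x, y, z⟩ ⟨x', y', z'⟩ h
    simp only at h
    obtain ⟨h1, h2, h3⟩ := H (x + y + z) x y z x' y' z' le_rfl h
    simp [h1, h2, h3]
  intro N
  induction N with
  | zero =>
    intro x y z x' y' z' hle h
    obtain ⟨⟨i1, i2, i3⟩, _⟩ := key x y z x' y' z' h
    omega
  | succ N ih =>
    intro x y z x' y' z' hle h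
    obtain ⟨⟨i1, i2, i3⟩, hpred⟩ := key x y z x' y' z' h
    by_cases h0 : x + y + z = 0
    · omega
    · obtain ⟨j1, j2, j3⟩ := ih (x-1) (y-1) (z-1) (x'-1) (y'-1) (z'-1) (by omega) hpred
      omega
end

section
/- Fix an integer d ≥ 2 and let A ⊆ ℤ be the set of integers whose canonical base-d representation has even length; explicitly, A = {a ∈ ℤ : the number of base-d digits of |a| is even}, where 0 has zero digits and a nonzero integer a has ⌊log_d |a|⌋ + 1 digits. Then A is not stable in (ℤ,+): for every N there exist a₀,…,a_N, b₀,…,b_N ∈ ℤ such that a_i + b_j ∈ A if and only if i ≤ j. -/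
/-- An `N`-ladder for a binary relation. -/
def HasLadder {X Y : Type*} (R : X → Y → Prop) (N : ℕ) : Prop :=
  ∃ (a : Fin (N + 1) → X) (b : Fin (N + 1) → Y), ∀ i j, R (a i) (b j) ↔ i ≤ j

/-- A binary relation is stable if for some `N` it admits no `N`-ladder. -/
def StableRel {X Y : Type*} (R : X → Y → Prop) : Prop := ∃ N : ℕ, ¬ HasLadder R N

/-- The number of base-`d` digits of the canonical representation of `a`:
`0` has zero digits and a nonzero integer has `⌊log_d |a|⌋ + 1` digits. -/
def numDigits (d : ℕ) (a : ℤ) : ℕ := (Nat.digits d a.natAbs).length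

/-- The set of integers whose canonical base-`d` representation has even length. -/
def EvenLengthSet (d : ℕ) : Set ℤ := {a | Even (numDigits d a)}

theorem stmt19 (d : ℕ) (hd : 2 ≤ d) :
    ¬ StableRel (fun x y : ℤ => x + y ∈ EvenLengthSet d) ∧
    ∀ N : ℕ, ∃ a b : Fin (N + 1) → ℤ,
      ∀ i j : Fin (N + 1), (a i + b j ∈ EvenLengthSet d ↔ i ≤ j) := by
  have key : ∀ N : ℕ, ∃ a b : Fin (N + 1) → ℤ,
      ∀ i j : Fin (N + 1), (a i + b j ∈ EvenLengthSet d ↔ i ≤ j) := by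
    intro N
    set P := d ^ (2 * N + 1) with hP
    have hNd : N + 1 ≤ d ^ (2 * N) := by
      calc N + 1 ≤ 2 ^ N := Nat.lt_two_pow_self (n := N)
        _ ≤ 2 ^ (2 * N) := Nat.pow_le_pow_right (by norm_num) (by omega)
        _ ≤ d ^ (2 * N) := Nat.pow_le_pow_left hd _
    have hstep : d ^ (2 * N) * d = P := by rw [hP, pow_succ]
    have hPP : 2 * d ^ (2 * N) ≤ P := by nlinarith [hNd]
    refine ⟨fun i => -(i : ℤ), fun j => (P : ℤ) + j, fun i j => ?_⟩
    have hi : (i : ℕ) ≤ N := Nat.lt_succ_iff.mp i.isLt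
    have hj : (j : ℕ) ≤ N := Nat.lt_succ_iff.mp j.isLt
    have hiP : (i : ℕ) ≤ P + j := by omega
    set n := P + (j : ℕ) - (i : ℕ) with hn
    have hsum : -(i : ℤ) + ((P : ℤ) + (j : ℕ)) = (n : ℤ) := by
      rw [hn, Nat.cast_sub hiP]; push_cast; ring
    have hlow : d ^ (2 * N) ≤ n := by omega
    have hnpos : n ≠ 0 := by
      have : 0 < d ^ (2 * N) := pow_pos (by omega) _
      omega
    have hhigh : n < d ^ (2 * N + 2) := by
      have h1 : P * d = d ^ (2 * N + 2) := by rw [hP]; ring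
      have h2 : 2 * P ≤ P * d := by nlinarith [pow_pos (show 0 < d by omega) (2 * N + 1)]
      omega
    have hmem : -(i : ℤ) + ((P : ℤ) + (j : ℕ)) ∈ EvenLengthSet d ↔
        Even ((Nat.digits d n).length) := by
      rw [hsum]
      simp [EvenLengthSet, numDigits]
    rw [show ((j : Fin (N + 1)) : ℤ) = ((j : ℕ) : ℤ) by norm_cast] at *
    rw [hmem, Nat.digits_len d n hd hnpos]
    by_cases hij : i ≤ j
    · have hijn : (i : ℕ) ≤ (j : ℕ) := hij
      have hlog : Nat.log d n = 2 * N + 1 := by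
        apply Nat.log_eq_of_pow_le_of_lt_pow
        · omega
        · exact hhigh
      rw [hlog]
      simp [hij, parity_simps]
    · have hijn : (j : ℕ) < (i : ℕ) := by
        exact_mod_cast Fin.lt_iff_val_lt_val.mp (not_le.mp hij)
      have hnP : n < P := by omega
      have hlog : Nat.log d n = 2 * N := by
        apply Nat.log_eq_of_pow_le_of_lt_pow hlow
        rw [pow_succ, hstep] at *
        omega
      rw [hlog]
      simp [hij, parity_simps]
  refine ⟨?_, key⟩
  intro ⟨N, hN⟩
  exact hN (key N)
end
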